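/- arXiv:2604.17684 — 13 statements merged into one kernel-verified Lean document; each statement's English description precedes it below -/
import Mathlib

section
/- Let m ≥ 2, let Γ be a subgroup of the symmetric group Perm(Fin m), and let O_1, …, O_t be the orbits of the natural action of Γ on Fin m. Let a : Fin m → ℕ. Suppose that for each orbit O there is a natural number n_O such that every m-edge-colouring of a complete graph on n_O vertices all of whose edge colours lie in O is Γ-switch equivalent to a colouring containing a monochromatic K_{a(c)} of colour c for some c ∈ O. Suppose further that N ∈ ℕ satisfies: for every function f assigning to each unordered pair of distinct elements of Fin N one of the orbits, there is an orbit O and an n_O-element set of vertices all of whose pairs are mapped by f to O. Then every m-edge-colouring of the complete graph on N vertices is Γ-switch equivalent to a colouring containing, for some i ∈ Fin m, a monochromatic K_{a(i)} of colour i. -/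
open scoped Classical in
/-- Switch the edge-colouring `c` at vertex `v` with permutation `π`: every edge
incident with `v` has its colour replaced by its image under `π`. -/
noncomputable def switchAt {V K : Type*} (c : Sym2 V → K) (π : Equiv.Perm K) (v : V) :
    Sym2 V → K :=
  fun s => if v ∈ s then π (c s) else c s

/-- Two colourings are `Γ`-switch equivalent if one is obtained from the other by a
finite sequence of switches at vertices with permutations from `Γ`. -/
def SwitchEquiv {V K : Type*} (Γ : Subgroup (Equiv.Perm K)) (c c' : Sym2 V → K) : Prop :=
  Relation.ReflTransGen (fun d d' => ∃ π ∈ Γ, ∃ v : V, d' = switchAt d π v) c c'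

/-- The colouring `c` contains a monochromatic complete graph on `t` vertices of colour `i`. -/
def HasMonoK {V K : Type*} (c : Sym2 V → K) (i : K) (t : ℕ) : Prop :=
  ∃ S : Finset V, S.card = t ∧ ∀ x ∈ S, ∀ y ∈ S, x ≠ y → c s(x, y) = i

lemma lift_switch {n N m : ℕ} (Γ : Subgroup (Equiv.Perm (Fin m)))
    (g : Fin n → Fin N) (hg : Function.Injective g)
    {c : Sym2 (Fin N) → Fin m} {c₀ c₁ : Sym2 (Fin n) → Fin m}
    (h : SwitchEquiv Γ c₀ c₁) (h0 : c₀ = fun s => c (s.map g)) :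
    ∃ C₁, SwitchEquiv Γ c C₁ ∧ c₁ = fun s => C₁ (s.map g) := by
  induction h with
  | refl => exact ⟨c, Relation.ReflTransGen.refl, h0⟩
  | tail _ step ih =>
    obtain ⟨C, hC, hC'⟩ := ih
    obtain ⟨π, hπ, v, rfl⟩ := step
    refine ⟨switchAt C π (g v), hC.tail ⟨π, hπ, g v, rfl⟩, ?_⟩
    funext s
    have hmem : v ∈ s ↔ g v ∈ s.map g := by
      simp only [Sym2.mem_map]
      constructor
      · intro h; exact ⟨v, h, rfl⟩
      · rintro ⟨w, hw, hwv⟩; rwa [hg hwv] at hw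
    simp only [switchAt, hC', hmem]
    split <;> rfl

/-- If the `Γ`-switch Ramsey property holds within each orbit of the action of `Γ` on the
colours, and `N` has the Ramsey property for orbit-valued edge labellings, then every
`m`-edge-colouring of `K_N` is `Γ`-switch equivalent to one containing a monochromatic
`K_{a i}` of colour `i` for some `i`. -/
theorem stmt0 (m : ℕ) (hm : 2 ≤ m) (Γ : Subgroup (Equiv.Perm (Fin m)))
    (a : Fin m → ℕ) (nO : Set (Fin m) → ℕ)
    (hOrb : ∀ i : Fin m, ∀ c : Sym2 (Fin (nO (MulAction.orbit Γ i))) → Fin m,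
      (∀ x y, x ≠ y → c s(x, y) ∈ MulAction.orbit Γ i) →
      ∃ c', SwitchEquiv Γ c c' ∧ ∃ j ∈ MulAction.orbit Γ i, HasMonoK c' j (a j))
    (N : ℕ)
    (hN : ∀ f : Sym2 (Fin N) → Set (Fin m),
      (∀ x y : Fin N, x ≠ y → ∃ i : Fin m, f s(x, y) = MulAction.orbit Γ i) →
      ∃ i : Fin m, ∃ S : Finset (Fin N),
        S.card = nO (MulAction.orbit Γ i) ∧
        ∀ x ∈ S, ∀ y ∈ S, x ≠ y → f s(x, y) = MulAction.orbit Γ i)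
    (c : Sym2 (Fin N) → Fin m) :
    ∃ c', SwitchEquiv Γ c c' ∧ ∃ i : Fin m, HasMonoK c' i (a i) := by
  classical
  obtain ⟨i, S, hScard, hS⟩ := hN (fun s => MulAction.orbit Γ (c s)) (fun x y _ => ⟨c s(x,y), rfl⟩)
  set n := nO (MulAction.orbit Γ i) with hn
  have hScard' : S.card = n := hScard
  let e := S.orderIsoOfFin hScard'
  let g : Fin n → Fin N := fun x => (e x : Fin N)
  have hg : Function.Injective g := fun x y hxy => e.injective (Subtype.ext hxy)
  have hgS : ∀ x, g x ∈ S := fun x => (e x).2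
  obtain ⟨c₁, hc₁, j, hj, T, hTcard, hT⟩ :=
    hOrb i (fun s => c (s.map g)) (by
      intro x y hxy
      have hxy' : g x ≠ g y := fun h => hxy (hg h)
      have := hS (g x) (hgS x) (g y) (hgS y) hxy'
      simp only [Sym2.map_pair_eq]
      rw [← this]
      exact MulAction.mem_orbit_self _)
  obtain ⟨C₁, hC₁, hrestr⟩ := lift_switch Γ g hg hc₁ rfl
  refine ⟨C₁, hC₁, j, T.image g, ?_, ?_⟩
  · rw [Finset.card_image_of_injective _ hg, hTcard]
  · intro x hx y hy hxy
    simp only [Finset.mem_image] at hx hy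
    obtain ⟨x', hx', rfl⟩ := hx
    obtain ⟨y', hy', rfl⟩ := hy
    have hxy' : x' ≠ y' := fun h => hxy (by rw [h])
    have := hT x' hx' y' hy' hxy'
    rw [hrestr] at this
    simpa using this
end

section
/- Let m ≥ 2 and let Γ be an abelian subgroup of Perm(Fin m) whose natural action on Fin m is semi-regular, i.e. no non-identity element of Γ fixes any element of Fin m. Let a : Fin m → ℕ with a(i) ≥ 3 for all i. Suppose N ∈ ℕ is such that every m-edge-colouring of the complete graph on N vertices contains, for some i ∈ Fin m, a monochromatic K_{a(i)} of colour i. Then every m-edge-colouring of the complete graph on ⌈N / |Γ|⌉ vertices is Γ-switch equivalent to a colouring containing, for some i ∈ Fin m, a monochromatic K_{a(i)} of colour i. -/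
open scoped Classical in
lemma switch_fold {V K : Type*} (g : V → Equiv.Perm K)
    (hcomm : ∀ v w x, g v (g w x) = g w (g v x)) :
    ∀ (L : List V), L.Nodup → ∀ (c : Sym2 V → K) (u v : V), u ≠ v →
      (L.foldl (fun d w => switchAt d (g w) w) c) s(u, v)
        = (if u ∈ L then g u else 1) ((if v ∈ L then g v else 1) (c s(u, v)))
  | [], _, c, u, v, huv => by simp
  | w :: L, hnd, c, u, v, huv => by
      simp only [List.foldl_cons]
      rw [switch_fold g hcomm L hnd.of_cons (switchAt c (g w) w) u v huv]
      have hswitch : switchAt c (g w) w s(u, v)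
          = if w = u ∨ w = v then g w (c s(u, v)) else c s(u, v) := by
        simp [switchAt, Sym2.mem_iff]
      have hwL : w ∉ L := (List.nodup_cons.1 hnd).1
      by_cases hwu : w = u
      · subst hwu
        have huL : w ∉ L := hwL
        have hwv : ¬ (w = v) := huv
        simp only [hswitch, if_pos (Or.inl rfl), List.mem_cons, if_neg huL, true_or,
          if_pos (Or.inl rfl : w = w ∨ w ∈ L)]
        by_cases hvL : v ∈ L
        · simp [hvL, hwv, hcomm, Ne.symm huv]
        · simp [hvL, hwv, Ne.symm huv]
      · by_cases hwv : w = v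
        · subst hwv
          have hvL : w ∉ L := hwL
          simp only [hswitch, List.mem_cons, if_neg hvL, or_true,
            if_pos (Or.inr rfl : w = u ∨ w = w), if_pos (Or.inl rfl : w = w ∨ w ∈ L)]
          by_cases huL : u ∈ L
          · simp [huL, hwu, hcomm, Ne.symm hwu]
          · simp [huL, hwu, Ne.symm hwu]
        · have : ¬ (w = u ∨ w = v) := by tauto
          simp only [hswitch, if_neg this, List.mem_cons]
          by_cases huL : u ∈ L <;> by_cases hvL : v ∈ L <;>
            simp [huL, hvL, hwu, hwv, Ne.symm hwu, Ne.symm hwv, eq_comm]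

lemma switch_fold_equiv {V K : Type*} (Γ : Subgroup (Equiv.Perm K)) (g : V → Equiv.Perm K)
    (hg : ∀ v, g v ∈ Γ) :
    ∀ (L : List V) (c : Sym2 V → K),
      SwitchEquiv Γ c (L.foldl (fun d w => switchAt d (g w) w) c)
  | [], c => .refl
  | w :: L, c => .head ⟨g w, hg w, w, rfl⟩ (switch_fold_equiv Γ g hg L _)


lemma stmt1_aux (m : ℕ) (Γ : Subgroup (Equiv.Perm (Fin m)))
    (hab : ∀ π ∈ Γ, ∀ σ ∈ Γ, π * σ = σ * π)
    (hsr : ∀ π ∈ Γ, ∀ i : Fin m, π i = i → π = 1)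
    (a : Fin m → ℕ) (ha : ∀ i, 3 ≤ a i)
    (N : ℕ) (hN : ∀ c : Sym2 (Fin N) → Fin m, ∃ i : Fin m, HasMonoK c i (a i))
    (n : ℕ) (hn : N ≤ n * Nat.card Γ)
    (c : Sym2 (Fin n) → Fin m) :
    ∃ c', SwitchEquiv Γ c c' ∧ ∃ i : Fin m, HasMonoK c' i (a i) := by
  classical
  have hfin : Finite Γ := Subtype.finite
  have hft : Fintype Γ := Fintype.ofFinite _
  -- commutation of coerced elements
  have hc : ∀ (π σ : Γ) (x : Fin m), (π : Equiv.Perm (Fin m)) ((σ : Equiv.Perm (Fin m)) x)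
      = (σ : Equiv.Perm (Fin m)) ((π : Equiv.Perm (Fin m)) x) := by
    intro π σ x
    rw [← Equiv.Perm.mul_apply, ← Equiv.Perm.mul_apply, hab _ π.2 _ σ.2]
  -- the blow-up colouring
  let chat : Sym2 (Fin n × Γ) → Fin m := Sym2.lift
    ⟨fun x y => (x.2 : Equiv.Perm (Fin m)) ((y.2 : Equiv.Perm (Fin m)) (c s(x.1, y.1))),
      fun x y => by simp only; rw [Sym2.eq_swap]; exact hc x.2 y.2 _⟩
  have hchat : ∀ x y : Fin n × Γ,
      chat s(x, y) = (x.2 : Equiv.Perm (Fin m)) ((y.2 : Equiv.Perm (Fin m)) (c s(x.1, y.1))) :=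
    fun x y => rfl
  -- an embedding of Fin N into the blow-up
  obtain ⟨e⟩ : Nonempty (Fin N ↪ Fin n × Γ) := by
    apply Function.Embedding.nonempty_of_card_le
    rw [Fintype.card_fin, Fintype.card_prod, Fintype.card_fin, ← Nat.card_eq_fintype_card]
    exact hn
  -- pull back and find a monochromatic clique in the blow-up
  obtain ⟨i, S, hScard, hSmono⟩ := hN (fun s => chat (s.map e))
  -- distinct clique vertices lie in distinct columns
  have hproj : ∀ x ∈ S, ∀ y ∈ S, x ≠ y → (e x).1 ≠ (e y).1 := by
    intro x hx y hy hxy h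
    -- pick a third vertex
    have hsub : ¬ S ⊆ {x, y} := by
      intro hsub
      have h1 : S.card ≤ 2 := (Finset.card_le_card hsub).trans
        ((Finset.card_insert_le _ _).trans (by simp))
      have h2 := ha i
      omega
    obtain ⟨z, hzS, hz⟩ := Finset.not_subset.1 hsub
    have hzx : z ≠ x := fun h => hz (by simp [h])
    have hzy : z ≠ y := fun h => hz (by simp [h])
    have e1 : (e x).2.val ((e z).2.val (c s((e x).1, (e z).1))) = i := by
      have := hSmono x hx z hzS (Ne.symm hzx)
      simpa [Sym2.map_pair_eq, hchat] using this
    have e2 : (e y).2.val ((e z).2.val (c s((e x).1, (e z).1))) = i := by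
      have := hSmono y hy z hzS (Ne.symm hzy)
      rw [h]
      simpa [Sym2.map_pair_eq, hchat] using this
    -- semi-regularity forces (e x).2 = (e y).2
    set w := (e z).2.val (c s((e x).1, (e z).1)) with hw
    have hfix : (((e y).2⁻¹ * (e x).2 : Γ) : Equiv.Perm (Fin m)) w = w := by
      have : (e x).2.val w = (e y).2.val w := e1.trans e2.symm
      simp [Subgroup.coe_mul, Equiv.Perm.mul_apply, this]
    have h1 : (((e y).2⁻¹ * (e x).2 : Γ) : Equiv.Perm (Fin m)) = 1 :=
      hsr _ ((e y).2⁻¹ * (e x).2).2 w hfix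
    have h2 : (e x).2 = (e y).2 := by
      have : ((e y).2⁻¹ * (e x).2 : Γ) = 1 := Subtype.ext h1
      have := mul_eq_one_iff_inv_eq.1 this
      exact Subtype.ext (by simpa using congrArg Subtype.val this.symm)
    exact hxy (e.injective (Prod.ext h h2))
  -- the switching function
  let g : Fin n → Equiv.Perm (Fin m) := fun v =>
    if h : ∃ x ∈ S, (e x).1 = v then ((e h.choose).2 : Equiv.Perm (Fin m)) else 1
  have hg : ∀ v, g v ∈ Γ := by
    intro v
    by_cases h : ∃ x ∈ S, (e x).1 = v
    · simp only [g, dif_pos h]; exact (e h.choose).2.2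
    · simp only [g, dif_neg h]; exact Γ.one_mem
  have hgval : ∀ x ∈ S, g (e x).1 = ((e x).2 : Equiv.Perm (Fin m)) := by
    intro x hx
    have h : ∃ x' ∈ S, (e x').1 = (e x).1 := ⟨x, hx, rfl⟩
    simp only [g, dif_pos h]
    obtain ⟨hmem, heq⟩ := h.choose_spec
    by_cases hch : h.choose = x
    · rw [hch]
    · exact absurd heq (hproj _ hmem _ hx hch)
  have hgcomm : ∀ v w x, g v (g w x) = g w (g v x) := by
    intro v w x
    rw [← Equiv.Perm.mul_apply, ← Equiv.Perm.mul_apply, hab _ (hg v) _ (hg w)]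
  -- perform all the switches
  set L := (Finset.univ : Finset (Fin n)).toList with hL
  refine ⟨L.foldl (fun d w => switchAt d (g w) w) c, switch_fold_equiv Γ g hg L c, i,
    S.image (fun x => (e x).1), ?_, ?_⟩
  · rw [Finset.card_image_of_injOn, hScard]
    intro x hx y hy hxy
    by_contra h
    exact hproj x hx y hy h hxy
  · intro u hu v hv huv
    obtain ⟨x, hx, rfl⟩ := Finset.mem_image.1 hu
    obtain ⟨y, hy, rfl⟩ := Finset.mem_image.1 hv
    have hxy : x ≠ y := fun h => huv (by rw [h])
    rw [switch_fold g hgcomm L (Finset.nodup_toList _) c _ _ huv,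
      if_pos (Finset.mem_toList.2 (Finset.mem_univ _)),
      if_pos (Finset.mem_toList.2 (Finset.mem_univ _)), hgval x hx, hgval y hy]
    have := hSmono x hx y hy hxy
    simpa [Sym2.map_pair_eq, hchat] using this

/-- If `Γ` is abelian and acts semi-regularly on the colours, then the `Γ`-switch Ramsey
number is at most `⌈R(a₁,…,a_m) / |Γ|⌉`. -/
theorem stmt1 (m : ℕ) (hm : 2 ≤ m) (Γ : Subgroup (Equiv.Perm (Fin m)))
    (hab : ∀ π ∈ Γ, ∀ σ ∈ Γ, π * σ = σ * π)
    (hsr : ∀ π ∈ Γ, ∀ i : Fin m, π i = i → π = 1)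
    (a : Fin m → ℕ) (ha : ∀ i, 3 ≤ a i)
    (N : ℕ) (hN : ∀ c : Sym2 (Fin N) → Fin m, ∃ i : Fin m, HasMonoK c i (a i))
    (c : Sym2 (Fin (N ⌈/⌉ Nat.card Γ)) → Fin m) :
    ∃ c', SwitchEquiv Γ c c' ∧ ∃ i : Fin m, HasMonoK c' i (a i) := by
  have hfin : Finite Γ := Subtype.finite
  have hk0 : 0 < Nat.card Γ := Nat.card_pos
  refine stmt1_aux m Γ hab hsr a ha N hN _ ?_ c
  have := le_smul_ceilDiv (α := ℕ) (β := ℕ) (b := N) hk0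
  rw [smul_eq_mul] at this
  exact this.trans_eq (Nat.mul_comm _ _)
end

section
/- Let m ≥ 2, let Γ be a subgroup of Perm(Fin m), and let ⁅Γ,Γ⁆ denote its commutator subgroup. Let O be an orbit of the natural action of ⁅Γ,Γ⁆ on Fin m and let j ∈ O. If c is an m-edge-colouring of a finite complete graph all of whose edge colours lie in O, then c is Γ-switch equivalent to the constant colouring in which every edge has colour j. -/
/-! Switching at `x` with `π⁻¹`, at `y` with `σ⁻¹`, at `x` with `π` and at `y` with `σ`
recolours only the edge `xy`, by the commutator `⁅σ, π⁆`. Since switch equivalence is a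
symmetric relation, every element of `⁅Γ, Γ⁆` can thus be applied to a single edge. An edge
coloured `g • j` with `g ∈ ⁅Γ, Γ⁆` is then recoloured `j` by `g⁻¹`, one edge at a time. -/

theorem switchAt_switchAt {V K : Type*} (c : Sym2 V → K) (π σ : Equiv.Perm K) (v : V) :
    switchAt (switchAt c π v) σ v = switchAt c (σ * π) v := by
  funext s
  simp only [switchAt]
  split_ifs <;> simp

theorem switchAt_one {V K : Type*} (c : Sym2 V → K) (v : V) : switchAt c 1 v = c := by
  funext s
  simp [switchAt]

open scoped commutatorElement in
/-- Only the edge `s(x, y)` is switched at both of its ends, so it alone sees the commutator. -/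
theorem switchAt_four_eq_update {V K : Type*} [DecidableEq V] {x y : V} (hxy : x ≠ y)
    (c : Sym2 V → K) (π σ : Equiv.Perm K) :
    switchAt (switchAt (switchAt (switchAt c π⁻¹ x) σ⁻¹ y) π x) σ y =
      Function.update c s(x, y) (⁅σ, π⁆ (c s(x, y))) := by
  funext s
  by_cases hs : s = s(x, y)
  · subst hs
    simp [switchAt, commutatorElement_def]
  · have hnot_both := (Sym2.mem_and_mem_iff hxy (z := s)).not.mpr hs
    rw [Function.update_of_ne hs]
    by_cases hx : x ∈ s <;> by_cases hy : y ∈ s <;> simp_all [switchAt]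

namespace SwitchEquiv

variable {V K : Type*} {Γ : Subgroup (Equiv.Perm K)}

theorem refl (c : Sym2 V → K) : SwitchEquiv Γ c c := Relation.ReflTransGen.refl

theorem trans {c₁ c₂ c₃ : Sym2 V → K} (h₁₂ : SwitchEquiv Γ c₁ c₂)
    (h₂₃ : SwitchEquiv Γ c₂ c₃) : SwitchEquiv Γ c₁ c₃ :=
  Relation.ReflTransGen.trans h₁₂ h₂₃

theorem of_switchAt (c : Sym2 V → K) {π : Equiv.Perm K} (hπ : π ∈ Γ) (v : V) :
    SwitchEquiv Γ c (switchAt c π v) :=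
  Relation.ReflTransGen.single ⟨π, hπ, v, rfl⟩

theorem symm {c₁ c₂ : Sym2 V → K} (h : SwitchEquiv Γ c₁ c₂) :
    SwitchEquiv Γ c₂ c₁ := by
  induction h with
  | refl => exact refl c₁
  | tail _ hstep ih =>
    obtain ⟨π, hπ, v, rfl⟩ := hstep
    refine Relation.ReflTransGen.head ⟨π⁻¹, inv_mem hπ, v, ?_⟩ ih
    rw [switchAt_switchAt, inv_mul_cancel, switchAt_one]

theorem update_of_mem_commutator [DecidableEq V] {x y : V} (hxy : x ≠ y) {g : Equiv.Perm K}
    (hg : g ∈ ⁅Γ, Γ⁆) (c : Sym2 V → K) :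
    SwitchEquiv Γ c (Function.update c s(x, y) (g (c s(x, y)))) := by
  rw [Subgroup.commutator_def] at hg
  induction hg using Subgroup.closure_induction generalizing c with
  | mem _ hz =>
    obtain ⟨p, hp, q, hq, rfl⟩ := hz
    rw [← switchAt_four_eq_update hxy c q p]
    exact (((of_switchAt c (inv_mem hq) x).trans (of_switchAt _ (inv_mem hp) y)).trans
      (of_switchAt _ hq x)).trans (of_switchAt _ hp y)
  | one => simpa using refl c
  | mul z w _ _ ihz ihw =>
    have h := ihz (Function.update c s(x, y) (w (c s(x, y))))
    simp only [Function.update_idem, Function.update_self] at h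
    exact (ihw c).trans h
  | inv z _ ih =>
    have h := ih (Function.update c s(x, y) (z⁻¹ (c s(x, y))))
    simp only [Function.update_idem, Function.update_self, Equiv.Perm.inv_def,
      Equiv.apply_symm_apply, Function.update_eq_self] at h
    exact h.symm

theorem ite_mem_of_mem_orbit_commutator [DecidableEq V] {j : K} (c : Sym2 V → K)
    (hc : ∀ x y : V, x ≠ y → c s(x, y) ∈ MulAction.orbit (↥⁅Γ, Γ⁆) j)
    (F : Finset (Sym2 V)) :
    SwitchEquiv Γ c (fun s => if s ∈ F ∧ ¬s.IsDiag then j else c s) := by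
  induction F using Finset.induction with
  | empty => simpa using refl c
  | @insert e F he ih =>
    refine ih.trans ?_
    by_cases hd : e.IsDiag
    · convert refl (Γ := Γ) _ using 1
      funext s
      by_cases hs : s = e <;> simp_all
    induction e using Sym2.ind with
    | _ x y =>
    have hxy : x ≠ y := by simpa using hd
    obtain ⟨g, hg⟩ := hc x y hxy
    convert update_of_mem_commutator hxy (g⁻¹).2 _ using 1
    funext s
    by_cases hs : s = s(x, y)
    · subst hs
      simp [hxy, he, ← hg, Subgroup.smul_def, Equiv.Perm.smul_def]
    · simp [hs]

end SwitchEquiv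

theorem stmt3_general (m : ℕ) (Γ : Subgroup (Equiv.Perm (Fin m)))
    (j : Fin m) (V : Type*) [Fintype V] (c : Sym2 V → Fin m)
    (hc : ∀ x y : V, x ≠ y → c s(x, y) ∈ MulAction.orbit (↥⁅Γ, Γ⁆) j) :
    ∃ c', SwitchEquiv Γ c c' ∧ ∀ x y : V, x ≠ y → c' s(x, y) = j := by
  classical
  exact ⟨_, SwitchEquiv.ite_mem_of_mem_orbit_commutator c hc Finset.univ,
    fun x y hxy => by simp [hxy]⟩

/-- If all the edge colours of a finite complete graph lie in a single orbit of the action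
of the commutator subgroup `⁅Γ,Γ⁆` on the colours, and `j` lies in that orbit, then the
colouring is `Γ`-switch equivalent to the constant colouring with colour `j`. -/
theorem stmt3 (m : ℕ) (hm : 2 ≤ m) (Γ : Subgroup (Equiv.Perm (Fin m)))
    (j : Fin m) (V : Type*) [Fintype V] (c : Sym2 V → Fin m)
    (hc : ∀ x y : V, x ≠ y → c s(x, y) ∈ MulAction.orbit (↥⁅Γ, Γ⁆) j) :
    ∃ c', SwitchEquiv Γ c c' ∧ ∀ x y : V, x ≠ y → c' s(x, y) = j :=
  stmt3_general m Γ j V c hc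
end

section
/- Let m ≥ 3 be odd and let Γ be the dihedral subgroup of Perm(ZMod m) generated by the translation x ↦ x + 1 and the negation x ↦ −x. Let a : ZMod m → ℕ with a(i) ≥ 2 for all i. Then the least n ∈ ℕ such that every edge-colouring of the complete graph on n vertices with colours in ZMod m is Γ-switch equivalent to a colouring containing, for some i ∈ ZMod m, a monochromatic K_{a(i)} of colour i, equals min_{i ∈ ZMod m} a(i). -/
section Aux

variable {m : ℕ}

/-- The dihedral subgroup in question. -/
def dihedralGamma (m : ℕ) : Subgroup (Equiv.Perm (ZMod m)) :=
  Subgroup.closure {(Equiv.addLeft (1 : ZMod m) : Equiv.Perm (ZMod m)),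
    (Equiv.neg (ZMod m) : Equiv.Perm (ZMod m))}

lemma addLeft_one_pow (k : ℕ) :
    (Equiv.addLeft (1 : ZMod m) : Equiv.Perm (ZMod m)) ^ k
      = Equiv.addLeft ((k : ZMod m)) := by
  induction k with
  | zero => ext x; simp
  | succ k ih =>
    ext x
    simp only [pow_succ, Equiv.Perm.mul_apply, ih, Equiv.coe_addLeft]
    push_cast
    ring

lemma addLeft_mem (hm : 3 ≤ m) (t : ZMod m) :
    (Equiv.addLeft t : Equiv.Perm (ZMod m)) ∈ dihedralGamma m := by
  haveI : NeZero m := ⟨by omega⟩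
  have h1 : (Equiv.addLeft (1 : ZMod m) : Equiv.Perm (ZMod m)) ∈ dihedralGamma m :=
    Subgroup.subset_closure (Set.mem_insert _ _)
  have := Subgroup.pow_mem _ h1 t.val
  rwa [addLeft_one_pow, ZMod.natCast_val, ZMod.cast_id] at this

lemma neg_mem (_hm : 3 ≤ m) :
    (Equiv.neg (ZMod m) : Equiv.Perm (ZMod m)) ∈ dihedralGamma m :=
  Subgroup.subset_closure (Set.mem_insert_of_mem _ rfl)

lemma switch_step {V : Type*} (c : Sym2 V → ZMod m) {π : Equiv.Perm (ZMod m)}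
    (hπ : π ∈ dihedralGamma m) (v : V) :
    SwitchEquiv (dihedralGamma m) c (switchAt c π v) :=
  Relation.ReflTransGen.single ⟨π, hπ, v, rfl⟩

lemma two_mul_half (hm : 3 ≤ m) (hodd : Odd m) :
    (2 : ZMod m) * (((m + 1) / 2 : ℕ) : ZMod m) = 1 := by
  haveI : NeZero m := ⟨by omega⟩
  have h : (2 * ((m + 1) / 2) : ℕ) = m + 1 := by
    obtain ⟨k, rfl⟩ := hodd; omega
  have : ((2 * ((m + 1) / 2) : ℕ) : ZMod m) = ((m + 1 : ℕ) : ZMod m) := by rw [h]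
  push_cast at this
  simpa [ZMod.natCast_self] using this

/-- The key primitive: a single edge's colour may be changed arbitrarily. -/
lemma update_edge (hm : 3 ≤ m) (hodd : Odd m) {V : Type*} [DecidableEq (Sym2 V)]
    (c : Sym2 V → ZMod m) {u v : V} (huv : u ≠ v) (w : ZMod m) :
    SwitchEquiv (dihedralGamma m) c (Function.update c s(u, v) w) := by
  classical
  set s : ZMod m := (((m + 1) / 2 : ℕ) : ZMod m) * (w - c s(u, v)) with hs
  set c1 := switchAt c (Equiv.addLeft s) u with hc1
  set c2 := switchAt c1 (Equiv.neg (ZMod m)) v with hc2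
  set c3 := switchAt c2 (Equiv.addLeft (-s)) u with hc3
  set c4 := switchAt c3 (Equiv.neg (ZMod m)) v with hc4
  have hequiv : SwitchEquiv (dihedralGamma m) c c4 := by
    refine ((((switch_step c (addLeft_mem hm s) u).trans
      (switch_step c1 (neg_mem hm) v)).trans
      (switch_step c2 (addLeft_mem hm (-s)) u)).trans
      (switch_step c3 (neg_mem hm) v))
  have hfin : c4 = Function.update c s(u, v) w := by
    funext e
    by_cases hu : u ∈ e <;> by_cases hv : v ∈ e
    · have he : e = s(u, v) := (Sym2.mem_and_mem_iff huv).mp ⟨hu, hv⟩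
      subst he
      simp only [hc4, hc3, hc2, hc1, switchAt, if_pos hu, if_pos hv,
        Equiv.neg_apply, Equiv.coe_addLeft, Function.update_self]
      have h2 : (2 : ZMod m) * (((m + 1) / 2 : ℕ) : ZMod m) = 1 :=
        two_mul_half hm hodd
      have : -(-s + -(s + c s(u, v))) = 2 * s + c s(u, v) := by ring
      rw [this, hs]
      rw [show (2 : ZMod m) * ((((m + 1) / 2 : ℕ) : ZMod m) * (w - c s(u, v)))
          = ((2 : ZMod m) * (((m + 1) / 2 : ℕ) : ZMod m)) * (w - c s(u, v)) by ring, h2]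
      ring
    · have hne : e ≠ s(u, v) := fun h => hv (h ▸ Sym2.mem_mk_right u v)
      simp only [hc4, hc3, hc2, hc1, switchAt, if_pos hu, if_neg hv,
        Equiv.coe_addLeft, Function.update_of_ne hne]
      ring
    · have hne : e ≠ s(u, v) := fun h => hu (h ▸ Sym2.mem_mk_left u v)
      simp only [hc4, hc3, hc2, hc1, switchAt, if_pos hv, if_neg hu,
        Equiv.neg_apply, Function.update_of_ne hne]
      ring
    · have hne : e ≠ s(u, v) := fun h => hu (h ▸ Sym2.mem_mk_left u v)
      simp only [hc4, hc3, hc2, hc1, switchAt, if_neg hu, if_neg hv,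
        Function.update_of_ne hne]
  rwa [hfin] at hequiv

/-- Any two colourings agreeing on diagonal edges are switch-equivalent. -/
lemma to_target (hm : 3 ≤ m) (hodd : Odd m) {n : ℕ} :
    ∀ (k : ℕ) (c c' : Sym2 (Fin n) → ZMod m),
      (Finset.univ.filter fun e => c e ≠ c' e).card ≤ k →
      (∀ e : Sym2 (Fin n), e.IsDiag → c e = c' e) →
      SwitchEquiv (dihedralGamma m) c c' := by
  classical
  intro k
  induction k with
  | zero =>
    intro c c' hcard _
    have : c = c' := by
      funext e
      by_contra hne
      have : e ∈ Finset.univ.filter fun e => c e ≠ c' e := by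
        simp [hne]
      have := Finset.card_pos.mpr ⟨e, this⟩
      omega
    exact this ▸ Relation.ReflTransGen.refl
  | succ k ih =>
    intro c c' hcard hdiag
    by_cases hempty : (Finset.univ.filter fun e => c e ≠ c' e) = ∅
    · have : c = c' := by
        funext e
        by_contra hne
        have : e ∈ Finset.univ.filter fun e => c e ≠ c' e := by simp [hne]
        simp [hempty] at this
      exact this ▸ Relation.ReflTransGen.refl
    · obtain ⟨e, he⟩ := Finset.nonempty_of_ne_empty hempty
      have hne : c e ≠ c' e := (Finset.mem_filter.mp he).2
      have hnd : ¬ e.IsDiag := fun h => hne (hdiag e h)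
      induction e using Sym2.ind with
      | _ u v =>
        have huv : u ≠ v := fun h => hnd (by simp [h])
        set c1 := Function.update c s(u, v) (c' s(u, v)) with hc1
        have hstep : SwitchEquiv (dihedralGamma m) c c1 :=
          update_edge hm hodd c huv _
        have hsub : (Finset.univ.filter fun e => c1 e ≠ c' e)
            ⊆ (Finset.univ.filter fun e => c e ≠ c' e).erase s(u, v) := by
          intro e' he'
          have h1 : c1 e' ≠ c' e' := (Finset.mem_filter.mp he').2
          have hne' : e' ≠ s(u, v) := by
            intro h
            apply h1
            rw [h, hc1, Function.update_self]
          refine Finset.mem_erase.mpr ⟨hne', Finset.mem_filter.mpr ⟨Finset.mem_univ _, ?_⟩⟩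
          rwa [hc1, Function.update_of_ne hne'] at h1
        have hcard1 : (Finset.univ.filter fun e => c1 e ≠ c' e).card ≤ k := by
          have := Finset.card_le_card hsub
          have := Finset.card_erase_of_mem he
          omega
        have hdiag1 : ∀ e : Sym2 (Fin n), e.IsDiag → c1 e = c' e := by
          intro e' hd
          have hne' : e' ≠ s(u, v) := by
            intro h; subst h; exact hnd hd
          rw [hc1, Function.update_of_ne hne']
          exact hdiag e' hd
        exact hstep.trans (ih c1 c' hcard1 hdiag1)

end Aux

/-- For odd `m ≥ 3` and the dihedral subgroup of `Perm (ZMod m)` generated by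
`x ↦ x + 1` and `x ↦ -x`, the `D_m`-switch Ramsey number equals `min_i a i`. -/
theorem stmt7 (m : ℕ) (hm : 3 ≤ m) (hodd : Odd m)
    (a : ZMod m → ℕ) (ha : ∀ i, 2 ≤ a i) :
    IsLeast {n : ℕ | ∀ c : Sym2 (Fin n) → ZMod m,
      ∃ c', SwitchEquiv
          (Subgroup.closure {(Equiv.addLeft (1 : ZMod m) : Equiv.Perm (ZMod m)),
            (Equiv.neg (ZMod m) : Equiv.Perm (ZMod m))}) c c' ∧
        ∃ i : ZMod m, HasMonoK c' i (a i)} (⨅ i, a i) := by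
  classical
  haveI : NeZero m := ⟨by omega⟩
  have hΓ : Subgroup.closure {(Equiv.addLeft (1 : ZMod m) : Equiv.Perm (ZMod m)),
      (Equiv.neg (ZMod m) : Equiv.Perm (ZMod m))} = dihedralGamma m := rfl
  have hrange : (⨅ i, a i) ∈ Set.range a := Nat.sInf_mem (Set.range_nonempty a)
  obtain ⟨i₀, hi₀⟩ := hrange
  constructor
  · -- membership
    intro c
    set c' : Sym2 (Fin (⨅ i, a i)) → ZMod m :=
      fun e => if e.IsDiag then c e else i₀ with hc'
    refine ⟨c', ?_, i₀, Finset.univ, ?_, ?_⟩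
    · rw [hΓ]
      refine to_target hm hodd (Finset.univ.filter fun e => c e ≠ c' e).card c c'
        le_rfl ?_
      intro e hd
      simp [hc', hd]
    · simp [hi₀]
    · intro x _ y _ hxy
      have : ¬ (s(x, y) : Sym2 (Fin (⨅ i, a i))).IsDiag := by
        simpa [Sym2.mk_isDiag_iff] using hxy
      simp [hc', this]
  · -- lower bound
    intro n hn
    by_contra hlt
    push_neg at hlt
    obtain ⟨c', _, i, S, hS, _⟩ := hn (fun _ => (0 : ZMod m))
    have h1 : (⨅ j, a j) ≤ a i := Nat.sInf_le ⟨i, rfl⟩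
    have h2 : S.card ≤ n := by
      have := Finset.card_le_card (Finset.subset_univ S)
      simpa using this
    omega
end

section
/- Let m ≥ 2 and let Γ be a subgroup of Perm(Fin m) acting transitively on Fin m. Let c be an m-edge-colouring of the complete graph on a finite vertex set V, let v ∈ V, and let n' be an integer with 2 ≤ n' ≤ |V|. Then the following are equivalent: (1) there exist a colouring c' that is Γ-switch equivalent to c, a colour i ∈ Fin m, and an n'-element set S ⊆ V with v ∈ S such that every pair of distinct vertices of S receives colour i under c'; (2) there exists a colouring c'' that is Γ-switch equivalent to c such that all edges incident with v receive the same colour under c'', and the restriction of c'' to V \ {v} contains a monochromatic K_{n'−1} of some colour. -/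
open scoped Classical in
lemma switch_aux {V : Type*} {m : ℕ} (Γ : Subgroup (Equiv.Perm (Fin m)))
    (htrans : ∀ i j : Fin m, ∃ π ∈ Γ, π i = j)
    (c' : Sym2 V → Fin m) (v : V) (i : Fin m) :
    ∀ T : Finset V, v ∉ T →
      ∃ c'', SwitchEquiv Γ c' c'' ∧ (∀ w ∈ T, c'' s(v, w) = i) ∧
        ∀ e : Sym2 V, (∀ w ∈ T, w ∉ e) → c'' e = c' e := by
  classical
  intro T
  induction T using Finset.induction with
  | empty =>
    intro _
    exact ⟨c', Relation.ReflTransGen.refl, by simp, fun e _ => rfl⟩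
  | @insert a s ha ih =>
    intro hv
    have hva : v ≠ a := fun h => hv (by simp [h])
    have hvs : v ∉ s := fun h => hv (Finset.mem_insert_of_mem h)
    obtain ⟨c₁, h₁, h₂, h₃⟩ := ih hvs
    obtain ⟨π, hπ, hπa⟩ := htrans (c₁ s(v, a)) i
    refine ⟨switchAt c₁ π a, Relation.ReflTransGen.tail h₁ ⟨π, hπ, a, rfl⟩, ?_, ?_⟩
    · intro w hw
      rcases Finset.mem_insert.mp hw with rfl | hw
      · simp only [switchAt, if_pos (by simp : w ∈ s(v, w))]
        exact hπa
      · have haw : w ≠ a := fun h => ha (h ▸ hw)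
        have : a ∉ s(v, w) := by simp [Sym2.mem_iff, hva.symm, Ne.symm haw]
        simp only [switchAt, if_neg this]
        exact h₂ w hw
    · intro e he
      have hae : a ∉ e := he a (Finset.mem_insert_self a s)
      simp only [switchAt, if_neg hae]
      exact h₃ e (fun w hw => he w (Finset.mem_insert_of_mem hw))

/-- For `Γ` acting transitively on the colours: a fixed vertex `v` lies in a monochromatic
`K_{n'}` in some colouring switch-equivalent to `c` iff `c` is switch-equivalent to a
colouring homogenised at `v` whose restriction to `V \ {v}` contains a monochromatic
`K_{n'-1}`. -/
theorem stmt9 (m : ℕ) (hm : 2 ≤ m) (Γ : Subgroup (Equiv.Perm (Fin m)))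
    (htrans : ∀ i j : Fin m, ∃ π ∈ Γ, π i = j)
    (V : Type*) [Fintype V] (c : Sym2 V → Fin m) (v : V)
    (n' : ℕ) (h2 : 2 ≤ n') (hn' : n' ≤ Fintype.card V) :
    (∃ c', SwitchEquiv Γ c c' ∧ ∃ i : Fin m, ∃ S : Finset V, v ∈ S ∧ S.card = n' ∧
        ∀ x ∈ S, ∀ y ∈ S, x ≠ y → c' s(x, y) = i) ↔
    (∃ c'', SwitchEquiv Γ c c'' ∧
        (∃ i : Fin m, ∀ w : V, w ≠ v → c'' s(v, w) = i) ∧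
        ∃ j : Fin m, ∃ S : Finset V, v ∉ S ∧ S.card = n' - 1 ∧
          ∀ x ∈ S, ∀ y ∈ S, x ≠ y → c'' s(x, y) = j) := by
  classical
  constructor
  · rintro ⟨c', hc', i, S, hvS, hScard, hmono⟩
    obtain ⟨c'', h1, h2, h3⟩ := switch_aux Γ htrans c' v i (Finset.univ \ S)
      (by simp [hvS])
    refine ⟨c'', hc'.trans h1, ⟨i, ?_⟩, i, S.erase v, Finset.notMem_erase v S, ?_, ?_⟩
    · intro w hw
      by_cases hwS : w ∈ S
      · have : c'' s(v, w) = c' s(v, w) := by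
          apply h3
          intro u hu
          simp only [Finset.mem_sdiff] at hu
          simp only [Sym2.mem_iff]
          rintro (rfl | rfl)
          · exact hu.2 hvS
          · exact hu.2 hwS
        rw [this]
        exact hmono v hvS w hwS (Ne.symm hw)
      · exact h2 w (by simp [hwS])
    · rw [Finset.card_erase_of_mem hvS, hScard]
    · intro x hx y hy hxy
      have hxS := Finset.mem_of_mem_erase hx
      have hyS := Finset.mem_of_mem_erase hy
      have : c'' s(x, y) = c' s(x, y) := by
        apply h3
        intro u hu
        simp only [Finset.mem_sdiff] at hu
        simp only [Sym2.mem_iff]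
        rintro (rfl | rfl)
        · exact hu.2 hxS
        · exact hu.2 hyS
      rw [this]
      exact hmono x hxS y hyS hxy
  · rintro ⟨c'', hc'', ⟨i, hi⟩, j, S, hvS, hScard, hmono⟩
    obtain ⟨π, hπ, hπij⟩ := htrans i j
    refine ⟨switchAt c'' π v, Relation.ReflTransGen.tail hc'' ⟨π, hπ, v, rfl⟩,
      j, insert v S, Finset.mem_insert_self v S, ?_, ?_⟩
    · rw [Finset.card_insert_of_notMem hvS, hScard]
      omega
    · intro x hx y hy hxy
      rcases Finset.mem_insert.mp hx with rfl | hxS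
      · rcases Finset.mem_insert.mp hy with rfl | hyS
        · exact absurd rfl hxy
        · have hyv : y ≠ x := fun h => hvS (h ▸ hyS)
          simp only [switchAt, if_pos (by simp : x ∈ s(x, y))]
          rw [hi y hyv, hπij]
      · rcases Finset.mem_insert.mp hy with rfl | hyS
        · have hxv : x ≠ y := fun h => hvS (h ▸ hxS)
          simp only [switchAt, if_pos (by simp : y ∈ s(x, y))]
          rw [Sym2.eq_swap, hi x hxv, hπij]
        · have hvx : x ≠ v := fun h => hvS (h ▸ hxS)
          have hvy : y ≠ v := fun h => hvS (h ▸ hyS)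
          have : v ∉ s(x, y) := by simp [Sym2.mem_iff, Ne.symm hvx, Ne.symm hvy]
          simp only [switchAt, if_neg this]
          exact hmono x hxS y hyS hxy
end

section
/- Let m ≥ 1 and n ≥ 3, and let k : Fin n → ZMod m. Then the C_m-switch by k fixes every colouring of the complete graph on Fin n with colours in ZMod m (equivalently, k(i) + k(j) = 0 for all i ≠ j) if and only if there exists h ∈ ZMod m with h + h = 0 such that k(i) = h for all i. In particular, if m is odd the only such k is the zero function, and if m is even there are exactly two such functions: the zero function and the constant function with value m/2. -/
/-- The edges (unordered pairs of distinct vertices) of the complete graph on `Fin n`. -/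
abbrev NonDiagEdge (n : ℕ) := {s : Sym2 (Fin n) // ¬ s.IsDiag}

/-- The `C_m`-switch of the colouring `c` by `k`: the edge `{u,v}` gets the colour
`c {u,v} + k u + k v`. -/
def CmSwitch {m n : ℕ} (c : NonDiagEdge n → ZMod m) (k : Fin n → ZMod m) :
    NonDiagEdge n → ZMod m :=
  fun e => c e + Sym2.lift ⟨fun u v => k u + k v, fun u v => add_comm (k u) (k v)⟩ e.1

/-- The colouring `c` contains a monochromatic complete graph on `t` vertices of colour `i`. -/
def HasMono {m n : ℕ} (c : NonDiagEdge n → ZMod m) (i : ZMod m) (t : ℕ) : Prop :=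
  ∃ S : Finset (Fin n), S.card = t ∧
    ∀ x ∈ S, ∀ y ∈ S, ∀ h : x ≠ y, c ⟨s(x, y), by simpa using h⟩ = i

/-- A `C_m`-switch by `k` fixes every colouring of `K_n` (`n ≥ 3`) iff `k` is constant
with value `h` satisfying `h + h = 0`; in particular for odd `m` only `k = 0` works, and
for even `m` exactly the two constants `0` and `m/2` work. -/
theorem stmt10 (m n : ℕ) (hm : 1 ≤ m) (hn : 3 ≤ n) (k : Fin n → ZMod m) :
    ((∀ c : NonDiagEdge n → ZMod m, CmSwitch c k = c) ↔
      ∀ i j : Fin n, i ≠ j → k i + k j = 0) ∧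
    ((∀ c : NonDiagEdge n → ZMod m, CmSwitch c k = c) ↔
      ∃ h : ZMod m, h + h = 0 ∧ ∀ i, k i = h) ∧
    (Odd m → ((∀ c : NonDiagEdge n → ZMod m, CmSwitch c k = c) ↔ ∀ i, k i = 0)) ∧
    (Even m →
      (((∀ c : NonDiagEdge n → ZMod m, CmSwitch c k = c) ↔
          ((∀ i, k i = 0) ∨ ∀ i, k i = ((m / 2 : ℕ) : ZMod m))) ∧
        ((m / 2 : ℕ) : ZMod m) ≠ 0)) := by
  haveI : NeZero m := ⟨by omega⟩
  have key : (∀ c : NonDiagEdge n → ZMod m, CmSwitch c k = c) ↔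
      ∀ i j : Fin n, i ≠ j → k i + k j = 0 := by
    constructor
    · intro H i j hij
      have := congrFun (H (fun _ => 0)) ⟨s(i, j), by simpa using hij⟩
      simpa [CmSwitch] using this
    · intro H c
      funext e
      obtain ⟨s, hs⟩ := e
      induction s using Sym2.inductionOn with
      | hf u v =>
        have huv : u ≠ v := by simpa using hs
        simp [CmSwitch, H u v huv]
  have key2 : (∀ i j : Fin n, i ≠ j → k i + k j = 0) ↔
      ∃ h : ZMod m, h + h = 0 ∧ ∀ i, k i = h := by
    constructor
    · intro H
      have hconst : ∀ i j : Fin n, k i = k j := by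
        intro i j
        by_cases hij : i = j
        · rw [hij]
        · obtain ⟨l, hl⟩ : ∃ l : Fin n, l ∉ ({i, j} : Finset (Fin n)) := by
            by_contra hc
            push_neg at hc
            have := Finset.card_le_card (fun x _ => hc x : (Finset.univ : Finset (Fin n)) ⊆ {i, j})
            have h2 : ({i, j} : Finset (Fin n)).card ≤ 2 :=
              Finset.card_insert_le _ _ |>.trans (by simp)
            simp [Finset.card_univ] at this
            omega
          simp at hl
          have h1 := H i l (fun h => hl.1 h.symm)
          have h2 := H j l (fun h => hl.2 h.symm)
          have : k i = -k l := by linear_combination h1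
          rw [this]
          linear_combination -h2
      refine ⟨k ⟨0, by omega⟩, ?_, fun i => hconst i _⟩
      have h01 : (⟨0, by omega⟩ : Fin n) ≠ ⟨1, by omega⟩ := by
        intro h; simpa using congrArg Fin.val h
      have := H _ _ h01
      rwa [hconst ⟨1, by omega⟩ ⟨0, by omega⟩] at this
    · rintro ⟨h, hh, hk⟩ i j _
      rw [hk i, hk j, hh]
  refine ⟨key, key.trans key2, ?_, ?_⟩
  · intro hodd
    rw [key, key2]
    constructor
    · rintro ⟨h, hh, hk⟩ i
      have hord : addOrderOf h ∣ 2 := addOrderOf_dvd_of_nsmul_eq_zero (by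
        rw [two_nsmul]; exact hh)
      have hord2 : addOrderOf h ∣ m := by
        have := addOrderOf_dvd_card (x := h)
        simpa [ZMod.card] using this
      have hd : addOrderOf h ∣ Nat.gcd 2 m := Nat.dvd_gcd hord hord2
      have hg : Nat.gcd 2 m = 1 := by
        rw [Nat.gcd_rec, Nat.odd_iff.mp hodd]; simp
      have h1 : addOrderOf h = 1 := Nat.eq_one_of_dvd_one (hg ▸ hd)
      have hz : h = 0 := by
        have := addOrderOf_nsmul_eq_zero h
        rwa [h1, one_nsmul] at this
      rw [hk i, hz]
    · intro hz
      exact ⟨0, by simp, fun i => hz i⟩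
  · intro heven
    have hm2 : 2 ≤ m := by
      rcases heven with ⟨t, ht⟩; omega
    have hhalf : ((m / 2 : ℕ) : ZMod m) ≠ 0 := by
      rw [Ne, ZMod.natCast_eq_zero_iff]
      intro hdvd
      have := Nat.le_of_dvd (by omega) hdvd
      omega
    have hhalfadd : ((m / 2 : ℕ) : ZMod m) + ((m / 2 : ℕ) : ZMod m) = 0 := by
      rw [← Nat.cast_add]
      have : m / 2 + m / 2 = m := by
        rcases heven with ⟨t, ht⟩; omega
      rw [this, ZMod.natCast_self]
    refine ⟨?_, hhalf⟩
    rw [key, key2]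
    constructor
    · rintro ⟨h, hh, hk⟩
      have hdvd2 : m ∣ 2 * h.val := by
        have : ((2 * h.val : ℕ) : ZMod m) = 0 := by
          push_cast
          rw [ZMod.natCast_val, ZMod.cast_id]
          linear_combination hh
        rwa [ZMod.natCast_eq_zero_iff] at this
      have hlt : h.val < m := ZMod.val_lt h
      obtain ⟨t, ht⟩ := heven
      have hcases : 2 * h.val = 0 ∨ 2 * h.val = m := by
        rcases Nat.lt_or_ge (2 * h.val) m with hlt2 | hge
        · exact Or.inl (Nat.eq_zero_of_dvd_of_lt hdvd2 hlt2)
        · right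
          have hsub : m ∣ 2 * h.val - m := (Nat.dvd_sub hdvd2 dvd_rfl)
          have := Nat.eq_zero_of_dvd_of_lt hsub (by omega)
          omega
      have hv : h.val = 0 ∨ h.val = m / 2 := by omega
      rcases hv with hv | hv
      · left; intro i
        rw [hk i]
        exact (ZMod.val_eq_zero h).mp hv
      · right; intro i
        rw [hk i, ← hv, ZMod.natCast_val, ZMod.cast_id]
    · rintro (hz | hz)
      · exact ⟨0, by simp, hz⟩
      · exact ⟨_, hhalfadd, hz⟩
end

section
/- Let m ≥ 1 and n ≥ 3. Consider the equivalence relation of C_m-switch equivalence on the set of all colourings of the complete graph on Fin n with colours in ZMod m. If m is odd, then every equivalence class has exactly m^n elements and the number of equivalence classes is m^{C(n,2) − n}, where C(n,2) = n(n−1)/2. If m is even, then every equivalence class has exactly m^n / 2 elements and the number of equivalence classes is 2 · m^{C(n,2) − n}. -/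
/-- Two colourings are `C_m`-switch equivalent if one is the `C_m`-switch of the other. -/
def CmEquiv {m n : ℕ} (c c' : NonDiagEdge n → ZMod m) : Prop :=
  ∃ k : Fin n → ZMod m, c' = CmSwitch c k

namespace ZMod

lemma eq_zero_of_add_self_eq_zero_of_odd {m : ℕ} (hm : Odd m) {a : ZMod m} (ha : a + a = 0) :
    a = 0 := by
  obtain ⟨t, rfl⟩ := hm
  have hchar : ((2 * t + 1 : ℕ) : ZMod (2 * t + 1)) = 0 := natCast_self _
  push_cast at hchar
  linear_combination (t + 1 : ZMod (2 * t + 1)) * ha - a * hchar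

lemma add_self_eq_zero_iff_eq_zero_or_eq {t : ℕ} [NeZero t] {a : ZMod (t + t)} :
    a + a = 0 ↔ a = 0 ∨ a = t := by
  refine ⟨fun ha => ?_, ?_⟩
  · obtain ⟨d, hd⟩ : t + t ∣ a.val + a.val := by
      rw [← natCast_eq_zero_iff]
      push_cast [natCast_zmod_val]
      exact ha
    have hlt : a.val < t + t := val_lt a
    have hd2 : d < 2 := by nlinarith [NeZero.pos t]
    interval_cases d
    · exact .inl ((val_eq_zero a).mp (by omega))
    · refine .inr (val_injective _ ?_)
      rw [val_natCast_of_lt (by omega)]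
      omega
  · rintro (rfl | rfl)
    · exact add_zero 0
    · exact_mod_cast natCast_self (t + t)

lemma card_add_self_eq_zero_of_odd {m : ℕ} (hm : Odd m) :
    Nat.card {a : ZMod m // a + a = 0} = 1 :=
  Nat.card_eq_one_iff_unique.mpr
    ⟨⟨fun a b => Subtype.ext ((eq_zero_of_add_self_eq_zero_of_odd hm a.2).trans
      (eq_zero_of_add_self_eq_zero_of_odd hm b.2).symm)⟩, ⟨⟨0, add_zero 0⟩⟩⟩

lemma card_add_self_eq_zero_of_even {m : ℕ} [NeZero m] (hm : Even m) :
    Nat.card {a : ZMod m // a + a = 0} = 2 := by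
  obtain ⟨t, rfl⟩ := hm
  have : NeZero t := ⟨by rintro rfl; exact NeZero.ne 0 rfl⟩
  have ht : (t : ZMod (t + t)) ≠ 0 := by
    rw [Ne, natCast_eq_zero_iff]
    exact Nat.not_dvd_of_pos_of_lt (NeZero.pos t) (by simp [NeZero.pos t])
  rw [← Set.ncard_pair ht.symm, ← Nat.card_coe_set_eq]
  congr
  ext a
  simp [add_self_eq_zero_iff_eq_zero_or_eq]

end ZMod

section EdgeSum

variable (V A : Type*) [AddCommGroup A]

def edgeSum : (V → A) →+ ({s : Sym2 V // ¬s.IsDiag} → A) where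
  toFun k e := Sym2.lift ⟨fun u v => k u + k v, fun u v => add_comm (k u) (k v)⟩ e.1
  map_zero' := by
    funext ⟨s, _⟩
    induction s using Sym2.ind
    simp
  map_add' k k' := by
    funext ⟨s, _⟩
    induction s using Sym2.ind
    simp only [Sym2.lift_mk, Pi.add_apply]
    abel

variable {V A}

@[simp]
lemma edgeSum_apply_mk (k : V → A) (u v : V) (h : ¬(s(u, v)).IsDiag) :
    edgeSum V A k ⟨s(u, v), h⟩ = k u + k v := rfl

lemma mem_ker_edgeSum_iff {k : V → A} :
    k ∈ (edgeSum V A).ker ↔ ∀ u v, u ≠ v → k u + k v = 0 := by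
  refine ⟨fun hk u v huv => ?_, fun hk => funext fun ⟨s, hs⟩ => ?_⟩
  · exact congrFun hk ⟨s(u, v), by simpa using huv⟩
  · induction s using Sym2.ind with
    | _ u v => simpa using hk u v (by simpa using hs)

variable [Fintype V]

lemma exists_ne_ne_of_two_lt_card (hV : 2 < Fintype.card V) (x y : V) :
    ∃ z, z ≠ x ∧ z ≠ y := by
  classical
  obtain ⟨z, -, hz⟩ := Finset.exists_mem_notMem_of_card_lt_card
    (s := {x, y}) (t := Finset.univ) (Finset.card_le_two.trans_lt hV)
  exact ⟨z, by simpa [not_or] using hz⟩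

lemma apply_eq_of_mem_ker_edgeSum (hV : 2 < Fintype.card V) {k : V → A}
    (hk : k ∈ (edgeSum V A).ker) (x y : V) : k x = k y := by
  obtain ⟨z, hzx, hzy⟩ := exists_ne_ne_of_two_lt_card hV x y
  rw [mem_ker_edgeSum_iff] at hk
  exact add_right_cancel ((hk x z hzx.symm).trans (hk y z hzy.symm).symm)

lemma card_ker_edgeSum (hV : 2 < Fintype.card V) :
    Nat.card (edgeSum V A).ker = Nat.card {a : A // a + a = 0} := by
  obtain ⟨v⟩ : Nonempty V := Fintype.card_pos_iff.mp (by omega)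
  symm
  refine Nat.card_eq_of_bijective (fun a => ⟨Function.const V a.1,
    mem_ker_edgeSum_iff.mpr fun _ _ _ => a.2⟩) ⟨fun a b hab => ?_, fun k => ?_⟩
  · exact Subtype.ext (congrFun (congrArg Subtype.val hab) v)
  · have hk := apply_eq_of_mem_ker_edgeSum hV k.2
    obtain ⟨w, hwv, -⟩ := exists_ne_ne_of_two_lt_card hV v v
    refine ⟨⟨k.1 v, ?_⟩, Subtype.ext (funext fun x => hk v x)⟩
    simpa [hk v w] using mem_ker_edgeSum_iff.mp k.2 v w hwv.symm

end EdgeSum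

lemma le_choose_two {n : ℕ} (hn : 3 ≤ n) : n ≤ n.choose 2 := by
  rw [Nat.choose_two_right, Nat.le_div_iff_mul_le two_pos]
  exact Nat.mul_le_mul_left n (by omega)

section Switching

open scoped Pointwise

variable {m n : ℕ}

lemma cmSwitch_eq_add (c : NonDiagEdge n → ZMod m) (k : Fin n → ZMod m) :
    CmSwitch c k = c + edgeSum _ _ k := rfl

lemma cmEquiv_iff {c c' : NonDiagEdge n → ZMod m} :
    CmEquiv c c' ↔ -c + c' ∈ (edgeSum (Fin n) (ZMod m)).range := by
  constructor
  · rintro ⟨k, rfl⟩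
    exact ⟨k, by rw [cmSwitch_eq_add, neg_add_cancel_left]⟩
  · rintro ⟨k, hk⟩
    exact ⟨k, by rw [cmSwitch_eq_add, hk, add_neg_cancel_left]⟩

lemma ncard_setOf_cmEquiv_eq_card_range (c : NonDiagEdge n → ZMod m) :
    Set.ncard {c' | CmEquiv c c'} = Nat.card (edgeSum (Fin n) (ZMod m)).range := by
  have hclass : {c' | CmEquiv c c'} = c +ᵥ ((edgeSum (Fin n) (ZMod m)).range : Set _) := by
    ext c'
    rw [Set.mem_vadd_set_iff_neg_vadd_mem]
    exact cmEquiv_iff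
  rw [hclass, Set.ncard_vadd_set, ← Nat.card_coe_set_eq]
  rfl

lemma card_quot_cmEquiv_eq_index :
    Nat.card (Quot (CmEquiv (m := m) (n := n))) = (edgeSum (Fin n) (ZMod m)).range.index := by
  have hrel : CmEquiv (m := m) (n := n) = QuotientAddGroup.leftRel (edgeSum _ _).range := by
    ext c c'
    rw [QuotientAddGroup.leftRel_apply]
    exact cmEquiv_iff
  rw [hrel]
  rfl

lemma card_range_edgeSum_mul (hn : 3 ≤ n) :
    Nat.card (edgeSum (Fin n) (ZMod m)).range * Nat.card {a : ZMod m // a + a = 0} = m ^ n := by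
  rw [← card_ker_edgeSum (V := Fin n) (by rw [Fintype.card_fin]; omega),
    ← AddSubgroup.index_ker, mul_comm, AddSubgroup.card_mul_index, Nat.card_fun, Nat.card_zmod, Nat.card_fin]

lemma index_range_edgeSum_mul :
    (edgeSum (Fin n) (ZMod m)).range.index * Nat.card (edgeSum (Fin n) (ZMod m)).range =
      m ^ n.choose 2 := by
  rw [AddSubgroup.index_mul_card, Nat.card_fun, Nat.card_zmod, Nat.card_eq_fintype_card,
    Sym2.card_subtype_not_diag, Fintype.card_fin]

variable [NeZero m]

lemma ncard_setOf_cmEquiv (hn : 3 ≤ n) (c : NonDiagEdge n → ZMod m) :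
    Set.ncard {c' | CmEquiv c c'} = m ^ n / Nat.card {a : ZMod m // a + a = 0} := by
  have : Nonempty {a : ZMod m // a + a = 0} := ⟨⟨0, add_zero 0⟩⟩
  rw [ncard_setOf_cmEquiv_eq_card_range, ← card_range_edgeSum_mul hn,
    Nat.mul_div_cancel _ Nat.card_pos]

lemma card_quot_cmEquiv (hn : 3 ≤ n) :
    Nat.card (Quot (CmEquiv (m := m) (n := n))) =
      Nat.card {a : ZMod m // a + a = 0} * m ^ (n.choose 2 - n) := by
  set r := Nat.card (edgeSum (Fin n) (ZMod m)).range
  set t := Nat.card {a : ZMod m // a + a = 0}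
  rw [card_quot_cmEquiv_eq_index]
  refine Nat.eq_of_mul_eq_mul_right (Nat.pos_of_neZero (m ^ n)) ?_
  calc _ = (edgeSum (Fin n) (ZMod m)).range.index * r * t := by
        rw [← card_range_edgeSum_mul hn, mul_assoc]
    _ = m ^ n.choose 2 * t := by rw [index_range_edgeSum_mul]
    _ = t * m ^ (n.choose 2 - n) * m ^ n := by
        rw [mul_assoc, ← pow_add, Nat.sub_add_cancel (le_choose_two hn), mul_comm]

end Switching

/-- For odd `m`, every `C_m`-switch equivalence class of colourings of `K_n` has `m ^ n`
elements and there are `m ^ (C(n,2) - n)` classes; for even `m`, every class has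
`m ^ n / 2` elements and there are `2 * m ^ (C(n,2) - n)` classes. -/
theorem stmt11 (m n : ℕ) (hm : 1 ≤ m) (hn : 3 ≤ n) :
    (Odd m →
      (∀ c : NonDiagEdge n → ZMod m, Set.ncard {c' | CmEquiv c c'} = m ^ n) ∧
      Nat.card (Quot (CmEquiv (m := m) (n := n))) = m ^ (n.choose 2 - n)) ∧
    (Even m →
      (∀ c : NonDiagEdge n → ZMod m, Set.ncard {c' | CmEquiv c c'} = m ^ n / 2) ∧
      Nat.card (Quot (CmEquiv (m := m) (n := n))) = 2 * m ^ (n.choose 2 - n)) := by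
  have : NeZero m := NeZero.of_pos hm
  refine ⟨fun hodd => ?_, fun heven => ?_⟩
  · simp only [ncard_setOf_cmEquiv hn, card_quot_cmEquiv hn,
      ZMod.card_add_self_eq_zero_of_odd hodd, Nat.div_one, one_mul, implies_true, and_self]
  · simp only [ncard_setOf_cmEquiv hn, card_quot_cmEquiv hn,
      ZMod.card_add_self_eq_zero_of_even heven, implies_true, and_self]
end

section
/- Let m ≥ 2 be even, let n ≥ 3, and let i, j ∈ ZMod m. Then the constant colouring of the complete graph on Fin n in which every edge has colour i is C_m-switch equivalent to the constant colouring in which every edge has colour j if and only if j − i is even in ZMod m, i.e. if and only if there exists x ∈ ZMod m with j − i = x + x. -/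
/-- For even `m` and `n ≥ 3`, the constant colourings of `K_n` with colours `i` and `j`
are `C_m`-switch equivalent iff `j - i` is even in `ZMod m`. -/
theorem stmt13 (m n : ℕ) (hm : 2 ≤ m) (heven : Even m) (hn : 3 ≤ n) (i j : ZMod m) :
    (∃ k : Fin n → ZMod m,
      (fun _ : NonDiagEdge n => j) = CmSwitch (fun _ : NonDiagEdge n => i) k) ↔
    ∃ x : ZMod m, j - i = x + x := by
  constructor
  · rintro ⟨k, hk⟩
    have key : ∀ u v : Fin n, u ≠ v → j = i + (k u + k v) := by
      intro u v huv
      have := congrFun hk ⟨s(u, v), by simpa using huv⟩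
      simpa [CmSwitch] using this
    set a : Fin n := ⟨0, by omega⟩
    set b : Fin n := ⟨1, by omega⟩
    set c : Fin n := ⟨2, by omega⟩
    have hab : a ≠ b := by simp [a, b, Fin.ext_iff]
    have hac : a ≠ c := by simp [a, c, Fin.ext_iff]
    have hbc : b ≠ c := by simp [b, c, Fin.ext_iff]
    have h1 := key a b hab
    have h2 := key a c hac
    have h3 := key b c hbc
    have hkbc : k b = k c := by
      have : k a + k b = k a + k c := by
        have := h1.symm.trans h2
        exact add_left_cancel (by linear_combination this)
      exact add_left_cancel this
    refine ⟨k b, ?_⟩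
    rw [h3, hkbc]
    ring
  · rintro ⟨x, hx⟩
    refine ⟨fun _ => x, ?_⟩
    funext e
    obtain ⟨p, q⟩ := e
    induction p using Sym2.ind with
    | _ u v =>
      simp only [CmSwitch, Sym2.lift_mk]
      linear_combination hx
end

section
/- Let m ≥ 2 be even and let a : ZMod m → ℕ with a(i) ≥ 2 for all i. Call i ∈ ZMod m even if it maps to 0 under the natural ring homomorphism ZMod m → ZMod 2 (which exists since 2 divides m), and odd otherwise. Let 𝒪 = min { a(i) : i odd } and ℰ = min { a(i) : i even }, and define b : ZMod m → ℕ by b(i) = 𝒪 if i is odd and b(i) = ℰ if i is even. Then R_{C_m}(a) = R_{C_m}(b), where for t : ZMod m → ℕ, R_{C_m}(t) denotes the least n such that every colouring of the complete graph on n vertices with colours in ZMod m is C_m-switch equivalent to a colouring containing, for some colour i, a monochromatic K_{t(i)} of colour i. -/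
/-- The `C_m`-switch Ramsey number: the least `n` such that every colouring of `K_n` with
colours in `ZMod m` is `C_m`-switch equivalent to one containing, for some colour `i`, a
monochromatic `K_{t i}` of colour `i`. -/
noncomputable def RCm (m : ℕ) (t : ZMod m → ℕ) : ℕ :=
  sInf {n : ℕ | ∀ c : NonDiagEdge n → ZMod m,
    ∃ k : Fin n → ZMod m, ∃ i : ZMod m, HasMono (CmSwitch c k) i (t i)}

lemma hasMono_mono {m n : ℕ} {c : NonDiagEdge n → ZMod m} {i : ZMod m} {t t' : ℕ}
    (h : t' ≤ t) (H : HasMono c i t) : HasMono c i t' := by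
  obtain ⟨S, hS, hmono⟩ := H
  obtain ⟨S', hsub, hcard⟩ := Finset.exists_subset_card_eq (hS ▸ h)
  exact ⟨S', hcard, fun x hx y hy hxy => hmono x (hsub hx) y (hsub hy) hxy⟩

lemma exists_half {m : ℕ} [NeZero m] (h2 : (2:ℕ) ∣ m) (x : ZMod m)
    (hx : ZMod.castHom h2 (ZMod 2) x = 0) : ∃ d : ZMod m, x = d + d := by
  have hv : ((x.val : ℕ) : ZMod 2) = 0 := by
    rwa [ZMod.natCast_val, ← ZMod.castHom_apply (h := h2)]
  obtain ⟨e, he⟩ := (ZMod.natCast_eq_zero_iff _ _).mp hv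
  refine ⟨(e : ZMod m), ?_⟩
  have hx' : x = ((x.val : ℕ) : ZMod m) := by simp [ZMod.natCast_val, ZMod.cast_id]
  rw [hx', he]; push_cast; ring

/-- For even `m`, `R_{C_m}(a₁,…,a_m) = R_{C_m}(𝒪,ℰ,𝒪,ℰ,…,𝒪,ℰ)` where `𝒪` and `ℰ` are the
minima of `a` over the odd and the even colours respectively. -/
theorem stmt15 (m : ℕ) (hm : 2 ≤ m) (h2 : (2 : ℕ) ∣ m)
    (a : ZMod m → ℕ) (ha : ∀ i, 2 ≤ a i) :
    RCm m a = RCm m (fun i => if ZMod.castHom h2 (ZMod 2) i = 0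
      then sInf (a '' {i : ZMod m | ZMod.castHom h2 (ZMod 2) i = 0})
      else sInf (a '' {i : ZMod m | ZMod.castHom h2 (ZMod 2) i ≠ 0})) := by
  have : NeZero m := ⟨by omega⟩
  set p : ZMod m →+* ZMod 2 := ZMod.castHom h2 (ZMod 2) with hp
  set b : ZMod m → ℕ := fun i => if p i = 0
      then sInf (a '' {i : ZMod m | p i = 0})
      else sInf (a '' {i : ZMod m | p i ≠ 0}) with hb
  show RCm m a = RCm m b
  -- b i ≤ a i, and b i is attained at some j with p j = p i
  have key : ∀ i : ZMod m, b i ≤ a i ∧ ∃ j, p j = p i ∧ a j = b i := by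
    intro i
    by_cases hi : p i = 0
    · have hne : (a '' {i : ZMod m | p i = 0}).Nonempty := ⟨a i, ⟨i, hi, rfl⟩⟩
      have hmem := Nat.sInf_mem hne
      obtain ⟨j, hj, hja⟩ := hmem
      refine ⟨?_, j, by rw [hj, hi], by simp [hb, hi, hja]⟩
      simp only [hb, if_pos hi]
      exact Nat.sInf_le ⟨i, hi, rfl⟩
    · have hne : (a '' {i : ZMod m | p i ≠ 0}).Nonempty := ⟨a i, ⟨i, hi, rfl⟩⟩
      have hmem := Nat.sInf_mem hne
      obtain ⟨j, hj, hja⟩ := hmem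
      have hpj : p j = p i := by
        have : p j ≠ 0 := hj
        have : ∀ x : ZMod 2, x ≠ 0 → x = 1 := by decide
        rw [this _ hj, this _ hi]
      refine ⟨?_, j, hpj, by simp [hb, hi, hja]⟩
      simp only [hb, if_neg hi]
      exact Nat.sInf_le ⟨i, hi, rfl⟩
  unfold RCm
  congr 1
  ext n
  simp only [Set.mem_setOf_eq]
  constructor
  · -- a-direction ⇒ b-direction: b i ≤ a i
    intro H c
    obtain ⟨k, i, hmono⟩ := H c
    exact ⟨k, i, hasMono_mono (key i).1 hmono⟩
  · -- b ⇒ a: re-switch by constant d with d + d = j - i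
    intro H c
    obtain ⟨k, i, hmono⟩ := H c
    obtain ⟨-, j, hpj, hja⟩ := key i
    have hji : p (j - i) = 0 := by rw [map_sub, hpj, sub_self]
    obtain ⟨d, hd⟩ := exists_half h2 _ hji
    refine ⟨fun v => k v + d, j, ?_⟩
    obtain ⟨S, hS, hcol⟩ := hmono
    refine ⟨S, hS.trans hja.symm, fun x hx y hy hxy => ?_⟩
    have := hcol x hx y hy hxy
    simp only [CmSwitch, Sym2.lift_mk] at this ⊢
    have : c ⟨s(x, y), by simpa using hxy⟩ + (k x + k y) = i := this
    rw [show c ⟨s(x, y), by simpa using hxy⟩ + (k x + d + (k y + d))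
        = c ⟨s(x, y), by simpa using hxy⟩ + (k x + k y) + (d + d) by ring, this, ← hd]
    ring
end

section
/- Let m ≥ 1 be odd and let a : ZMod m → ℕ with a(i) ≥ 2 for all i. Let N = min { a(i) : i ∈ ZMod m } and define b : ZMod m → ℕ by b(i) = N for all i. Then R_{C_m}(a) = R_{C_m}(b), where for t : ZMod m → ℕ, R_{C_m}(t) denotes the least n such that every colouring of the complete graph on n vertices with colours in ZMod m is C_m-switch equivalent to a colouring containing, for some colour i, a monochromatic K_{t(i)} of colour i. -/
section

variable {m n : ℕ}

theorem cmSwitch_cmSwitch (c : NonDiagEdge n → ZMod m) (k k' : Fin n → ZMod m) :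
    CmSwitch (CmSwitch c k) k' = CmSwitch c (k + k') := by
  funext ⟨e, _⟩
  induction e using Sym2.ind
  simp only [CmSwitch, Sym2.lift_mk, Pi.add_apply]
  ring

theorem ZMod.exists_add_self_eq (hodd : Odd m) (x : ZMod m) : ∃ κ : ZMod m, κ + κ = x := by
  obtain ⟨u, hu⟩ := (ZMod.isUnit_iff_coprime 2 m).mpr (Nat.coprime_two_left.mpr hodd)
  refine ⟨↑u⁻¹ * x, ?_⟩
  rw [← two_mul, ← mul_assoc, ← Nat.cast_ofNat, ← hu, Units.mul_inv, one_mul]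

theorem HasMono.mono {c : NonDiagEdge n → ZMod m} {i : ZMod m} {s t : ℕ}
    (h : HasMono c i t) (hst : s ≤ t) : HasMono c i s := by
  obtain ⟨S, rfl, hS⟩ := h
  obtain ⟨T, hTS, hT⟩ := Finset.exists_subset_card_eq hst
  exact ⟨T, hT, fun x hx y hy => hS x (hTS hx) y (hTS hy)⟩

theorem HasMono.exists_cmSwitch (hodd : Odd m) {c : NonDiagEdge n → ZMod m} {i : ZMod m} {t : ℕ}
    (h : HasMono c i t) (j : ZMod m) : ∃ k, HasMono (CmSwitch c k) j t := by
  obtain ⟨S, hS, hmono⟩ := h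
  obtain ⟨κ, hκ⟩ := ZMod.exists_add_self_eq hodd (j - i)
  refine ⟨fun v => if v ∈ S then κ else 0, S, hS, fun x hx y hy hxy => ?_⟩
  simp only [CmSwitch, Sym2.lift_mk, if_pos hx, if_pos hy, hmono x hx y hy hxy]
  linear_combination hκ

theorem exists_cmSwitch_hasMono_iff_iInf (hodd : Odd m) (a : ZMod m → ℕ)
    (c : NonDiagEdge n → ZMod m) :
    (∃ k i, HasMono (CmSwitch c k) i (a i)) ↔ ∃ k i, HasMono (CmSwitch c k) i (⨅ j, a j) := by
  constructor
  · rintro ⟨k, i, h⟩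
    exact ⟨k, i, h.mono (ciInf_le (OrderBot.bddBelow _) i)⟩
  · rintro ⟨k, i, h⟩
    obtain ⟨j, hj⟩ := ciInf_mem a
    obtain ⟨k', hk'⟩ := h.exists_cmSwitch hodd j
    rw [cmSwitch_cmSwitch, ← hj] at hk'
    exact ⟨k + k', j, hk'⟩

end

theorem stmt16_general (m : ℕ) (hodd : Odd m)
    (a : ZMod m → ℕ) :
    RCm m a = RCm m (fun _ => ⨅ i, a i) := by
  unfold RCm
  simp_rw [exists_cmSwitch_hasMono_iff_iInf hodd a]

/-- For odd `m`, `R_{C_m}(a₁,…,a_m) = R_{C_m}(N,N,…,N)` where `N = min_i a i`. -/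
theorem stmt16 (m : ℕ) (hm : 1 ≤ m) (hodd : Odd m)
    (a : ZMod m → ℕ) (ha : ∀ i, 2 ≤ a i) :
    RCm m a = RCm m (fun _ => ⨅ i, a i) :=
  stmt16_general m hodd a
end

section
/- The C_4-switch Ramsey number R_{C_4}(3,4,3,4) equals 7. Precisely, with colours in ZMod 4 and targets a(i) = 3 for odd i ∈ {1, 3} and a(i) = 4 for even i ∈ {0, 2}: (1) for every colouring c of the complete graph on Fin 7 with colours in ZMod 4 there exists k : Fin 7 → ZMod 4 such that the C_4-switch of c by k contains a monochromatic K_3 of colour 1 or of colour 3, or a monochromatic K_4 of colour 0 or of colour 2; and (2) there exists a colouring c of the complete graph on Fin 6 with colours in ZMod 4 such that for every k : Fin 6 → ZMod 4 the C_4-switch of c by k contains no monochromatic K_3 of colour 1 or 3 and no monochromatic K_4 of colour 0 or 2. -/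
namespace Stmt17Aux

/-- parity map `ZMod 4 → ZMod 2` -/
def par (x : ZMod 4) : ZMod 2 := x.val
/-- doubling map `ZMod 2 → ZMod 4` -/
def Dd : ZMod 2 → ZMod 4 := fun x => if x = 0 then 0 else 2
/-- high bit of an even element of `ZMod 4` -/
def hb : ZMod 4 → ZMod 2 := fun x => if x = 2 then 1 else 0
/-- half of an even element of `ZMod 4` -/
def halfE : ZMod 4 → ZMod 4 := fun x => if x = 2 then 1 else 0
/-- lift `ZMod 2 → ZMod 4` -/
def Ll : ZMod 2 → ZMod 4 := fun x => if x = 0 then 0 else 1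

lemma paradd : ∀ x y : ZMod 4, par (x + y) = par x + par y := by decide
lemma parsub : ∀ x y : ZMod 4, par (x - y) = par x - par y := by decide
lemma parone : par 1 = 1 := by decide
lemma parLl : ∀ x : ZMod 2, par (Ll x) = x := by decide
lemma Ddadd : ∀ x y : ZMod 2, Dd (x + y) = Dd x + Dd y := by decide
lemma Ddhb : ∀ x : ZMod 4, par x = 0 → Dd (hb x) = x := by decide
lemma two_halfE : ∀ x : ZMod 4, par x = 0 → 2 * halfE x = x := by decide
lemma ldouble : ∀ x : ZMod 4, par x = 0 → 2 * x = 0 := by decide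
lemma z2_ne_one : ∀ x : ZMod 2, x ≠ 1 → x = 0 := by decide
lemma z2_eq_of_add_zero : ∀ a b : ZMod 2, a + b = 0 → a = b := by decide
lemma z2_eq_of_ne : ∀ x y s : ZMod 2, x ≠ s → y ≠ s → x = y := by decide
lemma key3 : ∀ a b c : ZMod 2, a + b = 1 → a + c = 1 → b + c = 1 → False := by decide
lemma pigeon : ∀ v : Fin 5 → ZMod 2,
    ∃ i j l : Fin 5, i ≠ j ∧ i ≠ l ∧ j ≠ l ∧ v i = v j ∧ v i = v l := by decide
lemma two0 : (2 : ZMod 2) = 0 := by decide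
lemma z2_cases : ∀ z : ZMod 2, z = 0 ∨ z = 1 := by decide
lemma aux_epar : ∀ a b d : ZMod 2, a + b + d = 1 → 1 - a - b + d = 0 := by decide
lemma aux_twice : ∀ a : ZMod 2, a + a = 0 := by decide
lemma aux_tri : ∀ a b d : ZMod 2, a + b + d = 0 → d + a + b = 0 := by decide

/-- the colouring as a symmetric function on ordered pairs -/
def cc {n : ℕ} (c : NonDiagEdge n → ZMod 4) (u v : Fin n) : ZMod 4 :=
  if h : u = v then 0 else c ⟨s(u,v), by rw [Sym2.mk_isDiag_iff]; exact h⟩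

lemma cc_symm {n : ℕ} (c : NonDiagEdge n → ZMod 4) (u v : Fin n) : cc c u v = cc c v u := by
  unfold cc
  rcases eq_or_ne u v with h | h
  · subst h; rfl
  · rw [dif_neg h, dif_neg (Ne.symm h)]
    congr 1
    exact Subtype.ext Sym2.eq_swap

lemma switch_eq {n : ℕ} (c : NonDiagEdge n → ZMod 4) (k : Fin n → ZMod 4)
    {x y : Fin n} (hxy : x ≠ y) (p : ¬ (s(x,y)).IsDiag) :
    CmSwitch c k ⟨s(x,y), p⟩ = cc c x y + k x + k y := by
  unfold CmSwitch cc
  rw [dif_neg hxy]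
  show c _ + Sym2.lift _ s(x,y) = _
  rw [Sym2.lift_mk]
  exact (add_assoc _ _ _).symm

/-! ### Upper bound -/

theorem upper (c : NonDiagEdge 7 → ZMod 4) : ∃ k : Fin 7 → ZMod 4,
    HasMono (CmSwitch c k) 1 3 ∨ HasMono (CmSwitch c k) 3 3 ∨
    HasMono (CmSwitch c k) 0 4 ∨ HasMono (CmSwitch c k) 2 4 := by
  by_cases hodd : ∃ u v w : Fin 7, u ≠ v ∧ u ≠ w ∧ v ≠ w ∧
      par (cc c u v + cc c u w + cc c v w) = 1
  · -- Case A : odd triangle, switch it to a monochromatic triangle of colour 1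
    obtain ⟨u, v, w, huv, huw, hvw, hS⟩ := hodd
    have hS' : par (cc c u v) + par (cc c u w) + par (cc c v w) = 1 := by
      rw [← paradd, ← paradd]; exact hS
    have hepar : par (1 - cc c u v - cc c u w + cc c v w) = 0 := by
      rw [paradd, parsub, parsub, parone]
      exact aux_epar _ _ _ hS'
    set ku : ZMod 4 := halfE (1 - cc c u v - cc c u w + cc c v w) with hku_def
    have h2ku : 2 * ku = 1 - cc c u v - cc c u w + cc c v w := two_halfE _ hepar
    set kv : ZMod 4 := 1 - cc c u v - ku with hkv_def
    set kw : ZMod 4 := 1 - cc c u w - ku with hkw_def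
    set k : Fin 7 → ZMod 4 := fun t => if t = u then ku else if t = v then kv else
      if t = w then kw else 0 with hk_def
    have hkvu : k u = ku := by simp [hk_def]
    have hkvv : k v = kv := by simp [hk_def, Ne.symm huv]
    have hkvw : k w = kw := by simp [hk_def, Ne.symm huw, Ne.symm hvw]
    have Huv : cc c u v + k u + k v = 1 := by
      rw [hkvu, hkvv, hkv_def]; ring
    have Huw : cc c u w + k u + k w = 1 := by
      rw [hkvu, hkvw, hkw_def]; ring
    have Hvw : cc c v w + k v + k w = 1 := by
      rw [hkvv, hkvw, hkv_def, hkw_def]; linear_combination -h2ku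
    refine ⟨k, Or.inl ⟨{u, v, w}, ?_, ?_⟩⟩
    · rw [Finset.card_insert_of_notMem (by simp [huv, huw]),
        Finset.card_insert_of_notMem (by simp [hvw]), Finset.card_singleton]
    · intro x hx y hy hxy
      rw [switch_eq c k hxy]
      simp only [Finset.mem_insert, Finset.mem_singleton] at hx hy
      rcases hx with hx | hx | hx <;> rcases hy with hy | hy | hy <;>
        first
        | exact absurd (hx.trans hy.symm) hxy
        | (rw [hx, hy];
           first
           | exact Huv
           | exact Huw
           | exact Hvw
           | (rw [cc_symm c v u]; linear_combination Huv)
           | (rw [cc_symm c w u]; linear_combination Huw)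
           | (rw [cc_symm c w v]; linear_combination Hvw))
  · -- Case B : all triangles even
    push_neg at hodd
    have heven : ∀ u v w : Fin 7, u ≠ v → u ≠ w → v ≠ w →
        par (cc c u v + cc c u w + cc c v w) = 0 := by
      intro u v w h1 h2 h3
      exact z2_ne_one _ (hodd u v w h1 h2 h3)
    set k1 : Fin 7 → ZMod 4 := fun v => Ll (par (cc c 0 v)) with hk1_def
    have hcc00 : cc c 0 0 = 0 := dif_pos rfl
    have hk10 : k1 0 = 0 := by
      show Ll (par (cc c 0 0)) = 0
      rw [hcc00]; decide
    set c2 : Fin 7 → Fin 7 → ZMod 4 := fun u v => cc c u v + k1 u + k1 v with hc2_def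
    have hc2symm : ∀ u v, c2 u v = c2 v u := by
      intro u v
      show cc c u v + k1 u + k1 v = cc c v u + k1 v + k1 u
      rw [cc_symm c u v]; ring
    have hk1eq : ∀ v, k1 v = Ll (par (cc c 0 v)) := fun v => rfl
    have hc2even : ∀ u v : Fin 7, u ≠ v → par (c2 u v) = 0 := by
      have base : ∀ v : Fin 7, v ≠ 0 → par (c2 0 v) = 0 := by
        intro v hv
        show par (cc c 0 v + k1 0 + k1 v) = 0
        rw [hk10, add_zero, hk1eq v, paradd, parLl]
        exact aux_twice _
      intro u v huv
      rcases eq_or_ne u 0 with rfl | hu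
      · exact base v (Ne.symm huv)
      rcases eq_or_ne v 0 with rfl | hv
      · rw [hc2symm]; exact base u hu
      · have hT := heven 0 u v (Ne.symm hu) (Ne.symm hv) huv
        rw [paradd, paradd] at hT
        show par (cc c u v + k1 u + k1 v) = 0
        rw [hk1eq u, hk1eq v, paradd, paradd, parLl, parLl]
        exact aux_tri _ _ _ hT
    set hf : Fin 7 → Fin 7 → ZMod 2 := fun u v => hb (c2 u v) with hhf_def
    have hfsymm : ∀ u v, hf u v = hf v u := by
      intro u v
      show hb (c2 u v) = hb (c2 v u)
      rw [hc2symm u v]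
    have hDh : ∀ u v : Fin 7, u ≠ v → Dd (hf u v) = c2 u v := by
      intro u v huv; exact Ddhb _ (hc2even u v huv)
    set g : Fin 6 → Fin 6 → ZMod 2 :=
      fun a b => hf 0 a.succ + hf 0 b.succ + hf a.succ b.succ with hg_def
    -- Ramsey: find a monochromatic triangle in g
    obtain ⟨a, b, c3, hab, hac, hbc, hg1, hg2⟩ :
        ∃ a b c3 : Fin 6, a ≠ b ∧ a ≠ c3 ∧ b ≠ c3 ∧ g a b = g a c3 ∧ g a b = g b c3 := by
      obtain ⟨i, j, l, hij, hil, hjl, vij, vil⟩ := pigeon (fun i : Fin 5 => g 0 i.succ)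
      have vij' : g 0 i.succ = g 0 j.succ := vij
      have vil' : g 0 i.succ = g 0 l.succ := vil
      have hij' : i.succ ≠ j.succ := fun h => hij (Fin.succ_inj.mp h)
      have hil' : i.succ ≠ l.succ := fun h => hil (Fin.succ_inj.mp h)
      have hjl' : j.succ ≠ l.succ := fun h => hjl (Fin.succ_inj.mp h)
      have h0i : (0 : Fin 6) ≠ i.succ := (Fin.succ_ne_zero i).symm
      have h0j : (0 : Fin 6) ≠ j.succ := (Fin.succ_ne_zero j).symm
      have h0l : (0 : Fin 6) ≠ l.succ := (Fin.succ_ne_zero l).symm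
      by_cases h1 : g i.succ j.succ = g 0 i.succ
      · exact ⟨0, i.succ, j.succ, h0i, h0j, hij', vij', h1.symm⟩
      by_cases h2 : g i.succ l.succ = g 0 i.succ
      · exact ⟨0, i.succ, l.succ, h0i, h0l, hil', vil', h2.symm⟩
      by_cases h3 : g j.succ l.succ = g 0 i.succ
      · exact ⟨0, j.succ, l.succ, h0j, h0l, hjl', by rw [← vij', vil'],
          by rw [← vij']; exact h3.symm⟩
      · exact ⟨i.succ, j.succ, l.succ, hij', hil', hjl',
          z2_eq_of_ne _ _ _ h1 h2, z2_eq_of_ne _ _ _ h1 h3⟩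
    set s : ZMod 2 := g a b with hs_def
    set φ : Fin 7 → ZMod 2 := fun v => if v = 0 then 0 else s + hf 0 v with hφ_def
    have hφ0 : φ 0 = 0 := if_pos rfl
    have hφA : φ a.succ = s + hf 0 a.succ := if_neg (Fin.succ_ne_zero a)
    have hφB : φ b.succ = s + hf 0 b.succ := if_neg (Fin.succ_ne_zero b)
    have hφC : φ c3.succ = s + hf 0 c3.succ := if_neg (Fin.succ_ne_zero c3)
    set k : Fin 7 → ZMod 4 := fun v => k1 v + Dd (φ v) with hk_def
    have hgab : hf 0 a.succ + hf 0 b.succ + hf a.succ b.succ = s := hs_def.symm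
    have hgac : hf 0 a.succ + hf 0 c3.succ + hf a.succ c3.succ = s := hg1.symm
    have hgbc : hf 0 b.succ + hf 0 c3.succ + hf b.succ c3.succ = s := hg2.symm
    have hkey : ∀ x ∈ ({0, a.succ, b.succ, c3.succ} : Finset (Fin 7)),
        ∀ y ∈ ({0, a.succ, b.succ, c3.succ} : Finset (Fin 7)), x ≠ y →
        hf x y + φ x + φ y = s := by
      intro x hx y hy hxy
      simp only [Finset.mem_insert, Finset.mem_singleton] at hx hy
      rcases hx with hx | hx | hx | hx <;> rcases hy with hy | hy | hy | hy <;>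
        first
        | exact absurd (hx.trans hy.symm) hxy
        | (rw [hx, hy];
           first
           | (rw [hφ0, hφA]; linear_combination (hf 0 a.succ) * two0)
           | (rw [hφ0, hφB]; linear_combination (hf 0 b.succ) * two0)
           | (rw [hφ0, hφC]; linear_combination (hf 0 c3.succ) * two0)
           | (rw [hfsymm a.succ 0, hφA, hφ0]; linear_combination (hf 0 a.succ) * two0)
           | (rw [hfsymm b.succ 0, hφB, hφ0]; linear_combination (hf 0 b.succ) * two0)
           | (rw [hfsymm c3.succ 0, hφC, hφ0]; linear_combination (hf 0 c3.succ) * two0)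
           | (rw [hφA, hφB]; linear_combination hgab + s * two0)
           | (rw [hfsymm b.succ a.succ, hφB, hφA]; linear_combination hgab + s * two0)
           | (rw [hφA, hφC]; linear_combination hgac + s * two0)
           | (rw [hfsymm c3.succ a.succ, hφC, hφA]; linear_combination hgac + s * two0)
           | (rw [hφB, hφC]; linear_combination hgbc + s * two0)
           | (rw [hfsymm c3.succ b.succ, hφC, hφB]; linear_combination hgbc + s * two0))
    have hcard : ({0, a.succ, b.succ, c3.succ} : Finset (Fin 7)).card = 4 := by
      have h1 : a.succ ≠ b.succ := fun h => hab (Fin.succ_inj.mp h)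
      have h2 : a.succ ≠ c3.succ := fun h => hac (Fin.succ_inj.mp h)
      have h3 : b.succ ≠ c3.succ := fun h => hbc (Fin.succ_inj.mp h)
      rw [Finset.card_insert_of_notMem
          (by simp [(Fin.succ_ne_zero a).symm, (Fin.succ_ne_zero b).symm,
            (Fin.succ_ne_zero c3).symm]),
        Finset.card_insert_of_notMem (by simp [h1, h2]),
        Finset.card_insert_of_notMem (by simp [h3]), Finset.card_singleton]
    have hcol : ∀ x ∈ ({0, a.succ, b.succ, c3.succ} : Finset (Fin 7)),
        ∀ y ∈ ({0, a.succ, b.succ, c3.succ} : Finset (Fin 7)), ∀ hxy : x ≠ y,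
        CmSwitch c k ⟨s(x,y), by simpa using hxy⟩ = Dd s := by
      intro x hx y hy hxy
      rw [switch_eq c k hxy]
      have e1 : cc c x y + k x + k y = c2 x y + Dd (φ x) + Dd (φ y) := by
        show cc c x y + (k1 x + Dd (φ x)) + (k1 y + Dd (φ y)) =
          (cc c x y + k1 x + k1 y) + Dd (φ x) + Dd (φ y)
        ring
      rw [e1, ← hDh x y hxy, ← Ddadd, ← Ddadd, hkey x hx y hy hxy]
    rcases z2_cases s with hs | hs
    · refine ⟨k, Or.inr (Or.inr (Or.inl ⟨_, hcard, ?_⟩))⟩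
      intro x hx y hy hxy
      have hc := hcol x hx y hy hxy
      rwa [hs, show Dd 0 = (0 : ZMod 4) by decide] at hc
    · refine ⟨k, Or.inr (Or.inr (Or.inr ⟨_, hcard, ?_⟩))⟩
      intro x hx y hy hxy
      have hc := hcol x hx y hy hxy
      rwa [hs, show Dd 1 = (2 : ZMod 4) by decide] at hc

/-! ### Lower bound -/

def cc6 : Fin 6 → Fin 6 → ZMod 4 := fun x y =>
  if (x = 0 ∧ y = 3) ∨ (x = 3 ∧ y = 0) ∨ (x = 0 ∧ y = 4) ∨ (x = 4 ∧ y = 0) ∨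
     (x = 1 ∧ y = 2) ∨ (x = 2 ∧ y = 1) ∨ (x = 1 ∧ y = 4) ∨ (x = 4 ∧ y = 1) ∨
     (x = 2 ∧ y = 3) ∨ (x = 3 ∧ y = 2) then 2 else 0

lemma cc6symm : ∀ x y, cc6 x y = cc6 y x := by decide
lemma cc6par : ∀ x y, par (cc6 x y) = 0 := by decide
set_option maxHeartbeats 1000000 in
lemma cc6no4 : ∀ x y z w : Fin 6, x ≠ y → x ≠ z → x ≠ w → y ≠ z → y ≠ w → z ≠ w →
    ¬(cc6 x y + cc6 x z + cc6 y z = cc6 x y + cc6 x w + cc6 y w ∧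
      cc6 x y + cc6 x z + cc6 y z = cc6 x z + cc6 x w + cc6 z w ∧
      cc6 x y + cc6 x z + cc6 y z = cc6 y z + cc6 y w + cc6 z w) := by decide

def cLow : NonDiagEdge 6 → ZMod 4 := fun e => Sym2.lift ⟨cc6, fun u v => cc6symm u v⟩ e.1

lemma cLow_eq (k : Fin 6 → ZMod 4) {x y : Fin 6} (hxy : x ≠ y) (p : ¬ (s(x,y)).IsDiag) :
    CmSwitch cLow k ⟨s(x,y), p⟩ = cc6 x y + k x + k y := by
  unfold CmSwitch cLow
  show Sym2.lift _ s(x,y) + Sym2.lift _ s(x,y) = _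
  rw [Sym2.lift_mk, Sym2.lift_mk]
  exact (add_assoc _ _ _).symm

lemma no_tri (k : Fin 6 → ZMod 4) (i : ZMod 4) (hi : par i = 1) :
    ¬ HasMono (CmSwitch cLow k) i 3 := by
  rintro ⟨S, hcard, hmono⟩
  obtain ⟨x, y, z, hxy, hxz, hyz, rfl⟩ := Finset.card_eq_three.mp hcard
  have hx : x ∈ ({x, y, z} : Finset (Fin 6)) := by simp
  have hy : y ∈ ({x, y, z} : Finset (Fin 6)) := by simp
  have hz : z ∈ ({x, y, z} : Finset (Fin 6)) := by simp
  have E1 := hmono x hx y hy hxy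
  have E2 := hmono x hx z hz hxz
  have E3 := hmono y hy z hz hyz
  rw [cLow_eq k hxy] at E1
  rw [cLow_eq k hxz] at E2
  rw [cLow_eq k hyz] at E3
  have p1 : par (k x) + par (k y) = 1 := by
    have h := congrArg par E1
    rwa [paradd, paradd, cc6par, hi, zero_add] at h
  have p2 : par (k x) + par (k z) = 1 := by
    have h := congrArg par E2
    rwa [paradd, paradd, cc6par, hi, zero_add] at h
  have p3 : par (k y) + par (k z) = 1 := by
    have h := congrArg par E3
    rwa [paradd, paradd, cc6par, hi, zero_add] at h
  exact key3 _ _ _ p1 p2 p3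

lemma no_quad (k : Fin 6 → ZMod 4) (i : ZMod 4) (hi : par i = 0) :
    ¬ HasMono (CmSwitch cLow k) i 4 := by
  rintro ⟨S, hcard, hmono⟩
  have hne : S.Nonempty := by rw [← Finset.card_pos, hcard]; norm_num
  obtain ⟨x, hxS⟩ := hne
  have hcard3 : (S.erase x).card = 3 := by rw [Finset.card_erase_of_mem hxS, hcard]
  obtain ⟨y, z, w, hyz, hyw, hzw, hE⟩ := Finset.card_eq_three.mp hcard3
  have hyE : y ∈ S.erase x := by rw [hE]; simp
  have hzE : z ∈ S.erase x := by rw [hE]; simp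
  have hwE : w ∈ S.erase x := by rw [hE]; simp
  have hyS : y ∈ S := Finset.mem_of_mem_erase hyE
  have hzS : z ∈ S := Finset.mem_of_mem_erase hzE
  have hwS : w ∈ S := Finset.mem_of_mem_erase hwE
  have hxy : x ≠ y := (Finset.ne_of_mem_erase hyE).symm
  have hxz : x ≠ z := (Finset.ne_of_mem_erase hzE).symm
  have hxw : x ≠ w := (Finset.ne_of_mem_erase hwE).symm
  have Exy := hmono x hxS y hyS hxy
  have Exz := hmono x hxS z hzS hxz
  have Exw := hmono x hxS w hwS hxw
  have Eyz := hmono y hyS z hzS hyz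
  have Eyw := hmono y hyS w hwS hyw
  have Ezw := hmono z hzS w hwS hzw
  rw [cLow_eq k hxy] at Exy
  rw [cLow_eq k hxz] at Exz
  rw [cLow_eq k hxw] at Exw
  rw [cLow_eq k hyz] at Eyz
  rw [cLow_eq k hyw] at Eyw
  rw [cLow_eq k hzw] at Ezw
  have hp : ∀ (u v : Fin 6), cc6 u v + k u + k v = i → par (k u) = par (k v) := by
    intro u v E
    have h := congrArg par E
    rw [paradd, paradd, cc6par, hi, zero_add] at h
    exact z2_eq_of_add_zero _ _ h
  have hd : ∀ (u v : Fin 6), par (k u) = par (k v) → 2 * (k u - k v) = 0 := by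
    intro u v h
    apply ldouble
    rw [parsub, h, sub_self]
  have hdwz : 2 * (k w - k z) = 0 := hd w z ((hp z w Ezw).symm)
  have hdwy : 2 * (k w - k y) = 0 := hd w y ((hp y w Eyw).symm)
  have hdwx : 2 * (k w - k x) = 0 := hd w x ((hp x w Exw).symm)
  apply cc6no4 x y z w hxy hxz hxw hyz hyw hzw
  refine ⟨?_, ?_, ?_⟩
  · linear_combination Exz + Eyz - Exw - Eyw + hdwz
  · linear_combination Exy + Eyz - Exw - Ezw + hdwy
  · linear_combination Exy + Exz - Eyw - Ezw + hdwx

end Stmt17Aux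

open Stmt17Aux in
/-- `R_{C₄}(3,4,3,4) = 7`. -/
theorem stmt17 :
    (∀ c : NonDiagEdge 7 → ZMod 4, ∃ k : Fin 7 → ZMod 4,
      HasMono (CmSwitch c k) 1 3 ∨ HasMono (CmSwitch c k) 3 3 ∨
      HasMono (CmSwitch c k) 0 4 ∨ HasMono (CmSwitch c k) 2 4) ∧
    (∃ c : NonDiagEdge 6 → ZMod 4, ∀ k : Fin 6 → ZMod 4,
      ¬ HasMono (CmSwitch c k) 1 3 ∧ ¬ HasMono (CmSwitch c k) 3 3 ∧
      ¬ HasMono (CmSwitch c k) 0 4 ∧ ¬ HasMono (CmSwitch c k) 2 4) := by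
  constructor
  · exact upper
  · exact ⟨cLow, fun k => ⟨no_tri k 1 (by decide), no_tri k 3 (by decide),
      no_quad k 0 (by decide), no_quad k 2 (by decide)⟩⟩
end

section
/- The C_3-switch Ramsey number R_{C_3}(4,4,4) equals 18, which is R(3,3,3) + 1. Precisely: (1) for every colouring c of the complete graph on Fin 18 with colours in ZMod 3 there exists k : Fin 18 → ZMod 3 such that the C_3-switch of c by k contains a monochromatic K_4 of some colour; and (2) there exists a colouring c of the complete graph on Fin 17 with colours in ZMod 3 such that for every k : Fin 17 → ZMod 3 the C_3-switch of c by k contains no monochromatic K_4 of any colour. -/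
/-! ### Auxiliary lemmas -/

section Ramsey

lemma three_of_card {α : Type*} [DecidableEq α] (N : Finset α) (h : 3 ≤ N.card) :
    ∃ x ∈ N, ∃ y ∈ N, ∃ z ∈ N, x ≠ y ∧ x ≠ z ∧ y ≠ z := by
  obtain ⟨T, hT, hcard⟩ := Finset.exists_subset_card_eq h
  obtain ⟨x, y, z, hxy, hxz, hyz, rfl⟩ := Finset.card_eq_three.mp hcard
  exact ⟨x, hT (by simp), y, hT (by simp), z, hT (by simp), hxy, hxz, hyz⟩

lemma z3_unique' : ∀ a b u v : ZMod 3, (a ≠ b ∧ u ≠ a ∧ u ≠ b ∧ v ≠ a ∧ v ≠ b) → u = v := by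
  decide

lemma z3_unique (a b u v : ZMod 3) (h1 : a ≠ b) (h2 : u ≠ a) (h3 : u ≠ b) (h4 : v ≠ a)
    (h5 : v ≠ b) : u = v := z3_unique' a b u v ⟨h1, h2, h3, h4, h5⟩

lemma two_colour (f : Fin 17 → Fin 17 → ZMod 3) (a : ZMod 3) (V : Finset (Fin 17))
    (hV : 6 ≤ V.card)
    (hne : ∀ x ∈ V, ∀ y ∈ V, x ≠ y → f x y ≠ a) :
    ∃ x ∈ V, ∃ y ∈ V, ∃ z ∈ V, x ≠ y ∧ x ≠ z ∧ y ≠ z ∧ f x y = f x z ∧ f x z = f y z := by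
  obtain ⟨v, hv⟩ := Finset.card_pos.mp (show 0 < V.card by omega)
  have hWcard : 5 ≤ (V.erase v).card := by
    have h := Finset.card_erase_of_mem hv; omega
  have hmaps : ∀ x ∈ V.erase v, f v x ∈ (Finset.univ.erase a : Finset (ZMod 3)) := by
    intro x hx
    obtain ⟨hxv, hxV⟩ := Finset.mem_erase.mp hx
    exact Finset.mem_erase.mpr ⟨hne v hv x hxV (Ne.symm hxv), Finset.mem_univ _⟩
  obtain ⟨b, hb, hNb⟩ :=
    Finset.exists_lt_card_fiber_of_mul_lt_card_of_maps_to (n := 2) hmaps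
      (by rw [Finset.card_erase_of_mem (Finset.mem_univ a)]; simp; omega)
  obtain ⟨hba, -⟩ := Finset.mem_erase.mp hb
  have hsubV : ∀ w ∈ (V.erase v).filter (fun x => f v x = b), w ∈ V := by
    intro w hw
    exact Finset.mem_of_mem_erase (Finset.mem_filter.mp hw).1
  have hcol : ∀ w ∈ (V.erase v).filter (fun x => f v x = b), f v w = b := by
    intro w hw; exact (Finset.mem_filter.mp hw).2
  have hvne : ∀ w ∈ (V.erase v).filter (fun x => f v x = b), v ≠ w := by
    intro w hw
    exact Ne.symm (Finset.mem_erase.mp (Finset.mem_filter.mp hw).1).1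
  by_cases hedge : ∃ x ∈ (V.erase v).filter (fun x => f v x = b),
      ∃ y ∈ (V.erase v).filter (fun x => f v x = b), x ≠ y ∧ f x y = b
  · obtain ⟨x, hx, y, hy, hxy, hfxy⟩ := hedge
    refine ⟨v, hv, x, hsubV x hx, y, hsubV y hy, hvne x hx, hvne y hy, hxy, ?_, ?_⟩
    · rw [hcol x hx, hcol y hy]
    · rw [hcol y hy, hfxy]
  · push_neg at hedge
    obtain ⟨x, hx, y, hy, z, hz, hxy, hxz, hyz⟩ :=
      three_of_card ((V.erase v).filter (fun x => f v x = b)) (by omega)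
    have h1 : f x y ≠ a := hne x (hsubV x hx) y (hsubV y hy) hxy
    have h2 : f x z ≠ a := hne x (hsubV x hx) z (hsubV z hz) hxz
    have h3 : f y z ≠ a := hne y (hsubV y hy) z (hsubV z hz) hyz
    exact ⟨x, hsubV x hx, y, hsubV y hy, z, hsubV z hz, hxy, hxz, hyz,
      z3_unique a b _ _ (Ne.symm hba) h1 (hedge x hx y hy hxy) h2 (hedge x hx z hz hxz),
      z3_unique a b _ _ (Ne.symm hba) h2 (hedge x hx z hz hxz) h3 (hedge y hy z hz hyz)⟩

/-- `R(3,3,3) ≤ 17`: every symmetric 3-colouring of the pairs from `Fin 17` has a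
monochromatic triangle. -/
lemma ramsey17 (f : Fin 17 → Fin 17 → ZMod 3) :
    ∃ x y z : Fin 17, x ≠ y ∧ x ≠ z ∧ y ≠ z ∧ f x y = f x z ∧ f x z = f y z := by
  have hv : (0 : Fin 17) ∈ (Finset.univ : Finset (Fin 17)) := Finset.mem_univ _
  have hWcard : ((Finset.univ : Finset (Fin 17)).erase 0).card = 16 := by
    rw [Finset.card_erase_of_mem hv]; simp
  have hmaps : ∀ x ∈ (Finset.univ : Finset (Fin 17)).erase 0,
      f 0 x ∈ (Finset.univ : Finset (ZMod 3)) := fun x _ => Finset.mem_univ _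
  obtain ⟨a, -, hNa⟩ :=
    Finset.exists_lt_card_fiber_of_mul_lt_card_of_maps_to (n := 5) hmaps
      (by rw [hWcard]; simp)
  have hcol : ∀ w ∈ ((Finset.univ : Finset (Fin 17)).erase 0).filter (fun x => f 0 x = a),
      f 0 w = a := by
    intro w hw; exact (Finset.mem_filter.mp hw).2
  have hvne : ∀ w ∈ ((Finset.univ : Finset (Fin 17)).erase 0).filter (fun x => f 0 x = a),
      (0 : Fin 17) ≠ w := by
    intro w hw
    exact Ne.symm (Finset.mem_erase.mp (Finset.mem_filter.mp hw).1).1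
  by_cases hedge : ∃ x ∈ ((Finset.univ : Finset (Fin 17)).erase 0).filter (fun x => f 0 x = a),
      ∃ y ∈ ((Finset.univ : Finset (Fin 17)).erase 0).filter (fun x => f 0 x = a),
      x ≠ y ∧ f x y = a
  · obtain ⟨x, hx, y, hy, hxy, hfxy⟩ := hedge
    exact ⟨0, x, y, hvne x hx, hvne y hy, hxy,
      by rw [hcol x hx, hcol y hy], by rw [hcol y hy, hfxy]⟩
  · push_neg at hedge
    obtain ⟨x, -, y, -, z, -, h⟩ :=
      two_colour f a (((Finset.univ : Finset (Fin 17)).erase 0).filter (fun x => f 0 x = a))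
        (by omega) (fun x hx y hy hxy => hedge x hx y hy hxy)
    exact ⟨x, y, z, h⟩

end Ramsey

section Switch

lemma switch_of_triangle {n : ℕ} (c : NonDiagEdge n → ZMod 3) (F : Fin n → Fin n → ZMod 3)
    (hF : ∀ x y (h : x ≠ y), c ⟨s(x, y), by simpa using h⟩ = F x y)
    (hFs : ∀ x y, F x y = F y x)
    (v0 a b d : Fin n) (hv0a : v0 ≠ a) (hv0b : v0 ≠ b) (hv0d : v0 ≠ d)
    (hab : a ≠ b) (had : a ≠ d) (hbd : b ≠ d) (j : ZMod 3)
    (e1 : F a b - F v0 a - F v0 b = j)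
    (e2 : F a d - F v0 a - F v0 d = j)
    (e3 : F b d - F v0 b - F v0 d = j) :
    ∃ k : Fin n → ZMod 3, ∃ i : ZMod 3, HasMono (CmSwitch c k) i 4 := by
  refine ⟨fun x => if x = v0 then 2 * j else if x = a then j - F v0 a else
    if x = b then j - F v0 b else if x = d then j - F v0 d else 0, 0,
    {v0, a, b, d}, ?_, ?_⟩
  · rw [Finset.card_insert_of_notMem (by simp [hv0a, hv0b, hv0d]),
      Finset.card_insert_of_notMem (by simp [hab, had]),
      Finset.card_insert_of_notMem (by simp [hbd]), Finset.card_singleton]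
  · intro x hx y hy hxy
    have h3 : j + j + j = 0 := by
      have : (3 : ZMod 3) = 0 := rfl
      linear_combination j * this
    simp only [Finset.mem_insert, Finset.mem_singleton] at hx hy
    simp only [CmSwitch, Sym2.lift_mk]
    rw [hF x y hxy]
    rcases hx with rfl | rfl | rfl | rfl <;> rcases hy with rfl | rfl | rfl | rfl <;>
        first
        | exact absurd rfl hxy
        | (simp only [if_pos rfl, if_neg hv0a.symm, if_neg hv0b.symm, if_neg hv0d.symm,
            if_neg hab.symm, if_neg had.symm, if_neg hbd.symm,
            if_neg hv0a, if_neg hv0b, if_neg hv0d, if_neg hab, if_neg had, if_neg hbd, if_true]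
           first
           | linear_combination h3
           | linear_combination h3 + hFs x y
           | linear_combination h3 + e1
           | linear_combination h3 + e1 + hFs x y
           | linear_combination h3 + e2
           | linear_combination h3 + e2 + hFs x y
           | linear_combination h3 + e3
           | linear_combination h3 + e3 + hFs x y)

/-- The symmetric matrix of edge colours associated to a colouring. -/
def Fc {n : ℕ} (c : NonDiagEdge n → ZMod 3) : Fin n → Fin n → ZMod 3 :=
  fun x y => if h : x = y then 0 else c ⟨s(x, y), by simpa using h⟩

lemma Fc_eq {n : ℕ} (c : NonDiagEdge n → ZMod 3) (x y : Fin n) (h : x ≠ y) :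
    c ⟨s(x, y), by simpa using h⟩ = Fc c x y := by
  unfold Fc
  rw [dif_neg h]

lemma Fc_symm {n : ℕ} (c : NonDiagEdge n → ZMod 3) : ∀ x y, Fc c x y = Fc c y x := by
  intro x y
  by_cases h : x = y
  · subst h; rfl
  · unfold Fc
    rw [dif_neg h, dif_neg (Ne.symm h)]
    exact congrArg c (Subtype.ext Sym2.eq_swap)

lemma part1 (c : NonDiagEdge 18 → ZMod 3) :
    ∃ k : Fin 18 → ZMod 3, ∃ i : ZMod 3, HasMono (CmSwitch c k) i 4 := by
  obtain ⟨u, v, w, huv, huw, hvw, t1, t2⟩ := ramsey17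
    (fun x y => Fc c x.castSucc y.castSucc - Fc c (Fin.last 17) x.castSucc
      - Fc c (Fin.last 17) y.castSucc)
  exact switch_of_triangle c (Fc c) (Fc_eq c) (Fc_symm c)
    (Fin.last 17) u.castSucc v.castSucc w.castSucc
    (Fin.castSucc_lt_last u).ne' (Fin.castSucc_lt_last v).ne' (Fin.castSucc_lt_last w).ne'
    (fun h => huv (Fin.castSucc_inj.mp h)) (fun h => huw (Fin.castSucc_inj.mp h))
    (fun h => hvw (Fin.castSucc_inj.mp h))
    (Fc c u.castSucc v.castSucc - Fc c (Fin.last 17) u.castSucc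
      - Fc c (Fin.last 17) v.castSucc)
    rfl t1.symm (t1.trans t2).symm

end Switch

section Lower

/-- Colour table for the cyclic colouring of `K₁₇` witnessing the lower bound. -/
def tbl : Fin 17 → ZMod 3 := ![0,0,0,1,0,1,2,2,0,0,2,2,1,0,1,0,0]

/-- The cyclic colouring of `K₁₇`. -/
def Mc : Fin 17 → Fin 17 → ZMod 3 := fun a b => tbl (a - b)

lemma Mc_symm : ∀ a b, Mc a b = Mc b a := by decide

lemma Mc_shift : ∀ a b d : Fin 17, Mc a b = Mc (a - d) (b - d) := by decide

lemma Fin_sub_ne : ∀ a b d : Fin 17, a ≠ b → a - d ≠ b - d := by decide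

lemma Fin_sub_self : ∀ d : Fin 17, d - d = 0 := by decide

set_option maxHeartbeats 1000000 in
lemma Mc_prop0 : ∀ a b c : Fin 17, a ≠ b → a ≠ c → a ≠ 0 → b ≠ c → b ≠ 0 → c ≠ 0 →
    ¬(Mc a b + Mc c 0 = Mc a c + Mc b 0 ∧ Mc a b + Mc c 0 = Mc a 0 + Mc b c) := by decide

lemma Mc_prop : ∀ a b c d : Fin 17, a ≠ b → a ≠ c → a ≠ d → b ≠ c → b ≠ d → c ≠ d →
    ¬(Mc a b + Mc c d = Mc a c + Mc b d ∧ Mc a b + Mc c d = Mc a d + Mc b c) := by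
  intro a b c d hab hac had hbc hbd hcd
  have h := Mc_prop0 (a - d) (b - d) (c - d) (Fin_sub_ne _ _ _ hab) (Fin_sub_ne _ _ _ hac)
    (by rw [← Fin_sub_self d]; exact Fin_sub_ne _ _ _ had)
    (Fin_sub_ne _ _ _ hbc) (by rw [← Fin_sub_self d]; exact Fin_sub_ne _ _ _ hbd)
    (by rw [← Fin_sub_self d]; exact Fin_sub_ne _ _ _ hcd)
  rw [← Mc_shift a b d, ← Mc_shift a c d, ← Mc_shift b c d] at h
  rw [← Fin_sub_self d, ← Mc_shift c d d, ← Mc_shift b d d, ← Mc_shift a d d] at h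
  exact h

lemma part2 : ∃ c : NonDiagEdge 17 → ZMod 3, ∀ k : Fin 17 → ZMod 3, ∀ i : ZMod 3,
    ¬ HasMono (CmSwitch c k) i 4 := by
  refine ⟨fun e => Sym2.lift ⟨Mc, fun u v => Mc_symm u v⟩ e.1, ?_⟩
  rintro k i ⟨S, hcard, hmono⟩
  obtain ⟨a, T, haT, rfl, hT3⟩ := Finset.card_eq_succ.mp hcard
  obtain ⟨x, y, z, hxy, hxz, hyz, rfl⟩ := Finset.card_eq_three.mp hT3
  have hax : a ≠ x := fun h => haT (by simp [h])
  have hay : a ≠ y := fun h => haT (by simp [h])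
  have haz : a ≠ z := fun h => haT (by simp [h])
  have hma : a ∈ insert a ({x, y, z} : Finset (Fin 17)) := by simp
  have hmx : x ∈ insert a ({x, y, z} : Finset (Fin 17)) := by simp
  have hmy : y ∈ insert a ({x, y, z} : Finset (Fin 17)) := by simp
  have hmz : z ∈ insert a ({x, y, z} : Finset (Fin 17)) := by simp
  have key : ∀ p ∈ insert a ({x, y, z} : Finset (Fin 17)),
      ∀ q ∈ insert a ({x, y, z} : Finset (Fin 17)), ∀ _ : p ≠ q,
      Mc p q + k p + k q = i := by
    intro p hp q hq hpq
    have h := hmono p hp q hq hpq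
    simp only [CmSwitch, Sym2.lift_mk] at h
    linear_combination h
  have hax' := key a hma x hmx hax
  have hay' := key a hma y hmy hay
  have haz' := key a hma z hmz haz
  have hxy' := key x hmx y hmy hxy
  have hxz' := key x hmx z hmz hxz
  have hyz' := key y hmy z hmz hyz
  exact Mc_prop a x y z hax hay haz hxy hxz hyz
    ⟨by linear_combination hax' + hyz' - hay' - hxz',
     by linear_combination hax' + hyz' - haz' - hxy'⟩

end Lower

/-- `R_{C₃}(4,4,4) = 18 = R(3,3,3) + 1`: every colouring of `K_18` with colours in
`ZMod 3` can be `C₃`-switched to contain a monochromatic `K_4`, and some colouring of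
`K_17` cannot. -/
theorem stmt18 :
    (∀ c : NonDiagEdge 18 → ZMod 3, ∃ k : Fin 18 → ZMod 3, ∃ i : ZMod 3,
      HasMono (CmSwitch c k) i 4) ∧
    (∃ c : NonDiagEdge 17 → ZMod 3, ∀ k : Fin 17 → ZMod 3, ∀ i : ZMod 3,
      ¬ HasMono (CmSwitch c k) i 4) := by
  exact ⟨part1, part2⟩
end

section
/- The C_4-switch Ramsey number R_{C_4}(4,4,4,4) satisfies 43 ≤ R_{C_4}(4,4,4,4) ≤ R(3,3,3,3) + 1. Precisely: (1) there exists a colouring c of the complete graph on Fin 42 with colours in ZMod 4 such that for every k : Fin 42 → ZMod 4 the C_4-switch of c by k contains no monochromatic K_4 of any colour; and (2) for every N ∈ ℕ, if every colouring of the complete graph on Fin N with colours in ZMod 4 contains a monochromatic K_3 of some colour, then for every colouring c of the complete graph on Fin (N+1) with colours in ZMod 4 there exists k : Fin (N+1) → ZMod 4 such that the C_4-switch of c by k contains a monochromatic K_4 of some colour. -/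
namespace Stmt19Helper

def D : ℕ := 608791627547976444328882123531291109024821385861444009871238511350594218716922303856049159552554421704562247743670954415379622627969672522218859956199138159462021768343200405961632537966674761387037531962704146145612190481614151444197612676305126654840932966653467286123771192316639160083364478549361213143170746934570250383804698394894808744872350383541697171160063285337857652263546495618165370686164871204391406476296422770775785139280354791471703058952030836881315732823365485220280233082464288005729539361167766604561002682126102548145892382063775111496223182260489879225110472205631577971379486074784668433577597898244491491486046971631738129867122069907123424924240978487398394997289181701376764445706884120331097261027679930127246583003411755154353648937252153131127629085510697416908554523863195834068557158456699043561827830792444923838248291289139421768346572347020644372851444245991424364060914849912853664737031036761255237912716443898555204049819980250279083613551790733749577038976408917502532813933941082053098739521760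

def ent (u v : ℕ) : ℕ := (D >>> (2 * (u * 42 + v))) % 4

def quadOK (a b c d : ℕ) : Bool :=
  !(((ent a b + ent c d) % 4 == (ent a c + ent b d) % 4) &&
    ((ent a c + ent b d) % 4 == (ent a d + ent b c) % 4))

def allB (p : ℕ → Bool) : ℕ → Bool := Nat.rec true (fun k acc => acc && p k)

def chk : Bool :=
  allB (fun d => allB (fun c => allB (fun b => allB (fun a => quadOK a b c d) b) c) d) 42

set_option maxRecDepth 100000 in
set_option maxHeartbeats 4000000 in
lemma chk_true : chk = true := by decide

lemma allB_spec (p : ℕ → Bool) : ∀ n, allB p n = true → ∀ k, k < n → p k = true := by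
  intro n
  induction n with
  | zero => intro _ k hk; exact absurd hk (Nat.not_lt_zero k)
  | succ n ih =>
    intro h k hk
    have h2 : (allB p n && p n) = true := h
    rw [Bool.and_eq_true] at h2
    rcases h2 with ⟨h3, h4⟩
    rcases Nat.lt_succ_iff_lt_or_eq.mp hk with h5 | h5
    · exact ih h3 k h5
    · subst h5; exact h4

lemma key {a b c d : ℕ} (h1 : a < b) (h2 : b < c) (h3 : c < d) (h4 : d < 42) :
    ¬((ent a b + ent c d) % 4 = (ent a c + ent b d) % 4 ∧
      (ent a c + ent b d) % 4 = (ent a d + ent b c) % 4) := by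
  have h := allB_spec _ _ (allB_spec _ _ (allB_spec _ _ (allB_spec _ 42 chk_true d h4) c h3)
    b h2) a h1
  have h' : ¬(ent a b + ent c d) % 4 = (ent a c + ent b d) % 4 ∨
      ¬(ent a c + ent b d) % 4 = (ent a d + ent b c) % 4 := by
    simpa [quadOK] using h
  tauto

set_option maxRecDepth 40000 in
lemma ent_symm : ∀ u < 42, ∀ v < 42, ent u v = ent v u := by decide

/-- the colouring as a symmetric function on pairs of vertices -/
def f42 (u v : Fin 42) : ZMod 4 := ((ent u.val v.val : ℕ) : ZMod 4)

lemma f42_symm (u v : Fin 42) : f42 u v = f42 v u := by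
  unfold f42
  rw [ent_symm u.val u.isLt v.val v.isLt]

def c42 : NonDiagEdge 42 → ZMod 4 := fun e => Sym2.lift ⟨f42, f42_symm⟩ e.1

lemma natCast_pair_eq {m n p q : ℕ}
    (h : ((m : ZMod 4) + (n : ZMod 4) = (p : ZMod 4) + (q : ZMod 4))) :
    (m + n) % 4 = (p + q) % 4 := by
  have h2 : ((m + n : ℕ) : ZMod 4) = ((p + q : ℕ) : ZMod 4) := by push_cast; exact h
  exact (ZMod.natCast_eq_natCast_iff _ _ _).mp h2

end Stmt19Helper

open Stmt19Helper in
/-- `43 ≤ R_{C₄}(4,4,4,4) ≤ R(3,3,3,3) + 1`: some colouring of `K_42` with colours in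
`ZMod 4` cannot be `C₄`-switched to contain a monochromatic `K_4`; and whenever every
colouring of `K_N` contains a monochromatic `K_3`, every colouring of `K_{N+1}` can be
`C₄`-switched to contain a monochromatic `K_4`. -/
theorem stmt19 :
    (∃ c : NonDiagEdge 42 → ZMod 4, ∀ k : Fin 42 → ZMod 4, ∀ i : ZMod 4,
      ¬ HasMono (CmSwitch c k) i 4) ∧
    (∀ N : ℕ, (∀ c : NonDiagEdge N → ZMod 4, ∃ i : ZMod 4, HasMono c i 3) →
      ∀ c : NonDiagEdge (N + 1) → ZMod 4, ∃ k : Fin (N + 1) → ZMod 4, ∃ i : ZMod 4,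
        HasMono (CmSwitch c k) i 4) := by
  constructor
  · -- lower bound: the colouring c42 works
    refine ⟨c42, ?_⟩
    rintro k i ⟨S, hcard, hmono⟩
    let iso := S.orderIsoOfFin hcard
    set a := (iso 0 : Fin 42) with ha
    set b := (iso 1 : Fin 42) with hb
    set c := (iso 2 : Fin 42) with hc
    set d := (iso 3 : Fin 42) with hd
    have hab : a < b := by
      exact_mod_cast iso.strictMono (show (0 : Fin 4) < 1 by decide)
    have hbc : b < c := by
      exact_mod_cast iso.strictMono (show (1 : Fin 4) < 2 by decide)
    have hcd : c < d := by
      exact_mod_cast iso.strictMono (show (2 : Fin 4) < 3 by decide)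
    have hma : (a : Fin 42) ∈ S := (iso 0).2
    have hmb : (b : Fin 42) ∈ S := (iso 1).2
    have hmc : (c : Fin 42) ∈ S := (iso 2).2
    have hmd : (d : Fin 42) ∈ S := (iso 3).2
    have edge : ∀ x ∈ S, ∀ y ∈ S, ∀ h : x ≠ y, f42 x y + (k x + k y) = i := by
      intro x hx y hy h
      exact hmono x hx y hy h
    have e1 := edge a hma b hmb hab.ne
    have e2 := edge a hma c hmc (hab.trans hbc).ne
    have e3 := edge a hma d hmd ((hab.trans hbc).trans hcd).ne
    have e4 := edge b hmb c hmc hbc.ne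
    have e5 := edge b hmb d hmd (hbc.trans hcd).ne
    have e6 := edge c hmc d hmd hcd.ne
    have q1 : f42 a b + f42 c d = f42 a c + f42 b d := by
      linear_combination e1 + e6 - e2 - e5
    have q2 : f42 a c + f42 b d = f42 a d + f42 b c := by
      linear_combination e2 + e5 - e3 - e4
    exact key (show a.val < b.val from hab) (show b.val < c.val from hbc)
      (show c.val < d.val from hcd) d.isLt ⟨natCast_pair_eq q1, natCast_pair_eq q2⟩
  · -- upper bound step
    intro N hN c
    set vl : Fin (N + 1) := Fin.last N with hvl
    -- total symmetric function version of c
    set E : Fin (N + 1) → Fin (N + 1) → ZMod 4 := fun u v =>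
      if h : u = v then 0 else c ⟨s(u, v), fun hd => h (Sym2.mk_isDiag_iff.mp hd)⟩ with hE
    have Esymm : ∀ u v, E u v = E v u := by
      intro u v
      by_cases h : u = v
      · subst h; rfl
      · rw [hE]
        simp only [dif_neg h, dif_neg (Ne.symm h)]
        congr 1
        exact Subtype.ext (Sym2.eq_swap)
    have Eedge : ∀ (x y : Fin (N + 1)) (h : ¬ s(x,y).IsDiag),
        c ⟨s(x, y), h⟩ = E x y := by
      intro x y h
      have hxy : x ≠ y := fun he => h (by simp [he])
      rw [hE]; simp only [dif_neg hxy]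
    -- the derived colouring on Fin N
    set dcol : NonDiagEdge N → ZMod 4 := fun e =>
      Sym2.lift ⟨fun u w => E u.castSucc w.castSucc - E u.castSucc vl - E w.castSucc vl,
        by intro u w; dsimp only; rw [Esymm u.castSucc w.castSucc]; ring⟩ e.1 with hdcol
    obtain ⟨i, S, hS3, hmono⟩ := hN dcol
    refine ⟨fun u => if u = vl then i else - E u vl, i, ?_⟩
    have hcs_ne : ∀ u : Fin N, u.castSucc ≠ vl := fun u => (Fin.castSucc_lt_last u).ne
    refine ⟨insert vl (S.map ⟨Fin.castSucc, Fin.castSucc_injective N⟩), ?_, ?_⟩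
    · rw [Finset.card_insert_of_notMem, Finset.card_map, hS3]
      intro hmem
      obtain ⟨u, _, hu⟩ := Finset.mem_map.mp hmem
      exact hcs_ne u hu
    · intro x hx y hy hne
      have hswitch : ∀ (x y : Fin (N + 1)) (h : ¬ s(x,y).IsDiag),
          CmSwitch c (fun u => if u = vl then i else - E u vl) ⟨s(x, y), h⟩ =
            E x y + ((if x = vl then i else - E x vl) + (if y = vl then i else - E y vl)) := by
        intro x y h
        show c ⟨s(x,y), h⟩ + _ = _
        rw [Eedge x y h]
        rfl
      rw [hswitch x y (by simpa using hne)]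
      rcases Finset.mem_insert.mp hx with hx1 | hx2 <;>
        rcases Finset.mem_insert.mp hy with hy1 | hy2
      · exact absurd (hx1.trans hy1.symm) hne
      · -- x = vl, y = castSucc u
        obtain ⟨u, huS, hu⟩ := Finset.mem_map.mp hy2
        subst hx1; subst hu
        simp only [Function.Embedding.coeFn_mk] at hne ⊢
        rw [if_pos trivial, if_neg (hcs_ne u), Esymm vl u.castSucc]
        ring
      · -- y = vl, x = castSucc u
        obtain ⟨u, huS, hu⟩ := Finset.mem_map.mp hx2
        subst hy1; subst hu
        simp only [Function.Embedding.coeFn_mk] at hne ⊢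
        rw [if_pos trivial, if_neg (hcs_ne u)]
        ring
      · obtain ⟨u, huS, hu⟩ := Finset.mem_map.mp hx2
        obtain ⟨w, hwS, hw⟩ := Finset.mem_map.mp hy2
        subst hu; subst hw
        simp only [Function.Embedding.coeFn_mk] at hne ⊢
        have huw : u ≠ w := fun he => hne (by rw [he])
        have hd2 : E u.castSucc w.castSucc - E u.castSucc vl - E w.castSucc vl = i :=
          hmono u huS w hwS huw
        rw [if_neg (hcs_ne u), if_neg (hcs_ne w)]
        linear_combination hd2
end
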